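/- arXiv:1902.00871 — 3 statements merged into one kernel-verified Lean document; each statement's English description precedes it below -/
import Mathlib

section
/- Let m ∈ V^± and let 𝒫₁, …, 𝒫ₖ be distinct pairwise compatible ΓW-partitions based at m, with Pᵢ the side of 𝒫ᵢ containing m. Then the images of φ(P₁,m), …, φ(Pₖ,m) in Out(A_Γ) generate a free abelian subgroup of rank k: they pairwise commute as outer automorphisms, and for any integers n₁, …, nₖ, if the composition φ(P₁,m)^{n₁} ∘ ⋯ ∘ φ(Pₖ,m)^{nₖ} is an inner automorphism of A_Γ, then n₁ = ⋯ = nₖ = 0. -/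
namespace GW

variable {V : Type*}

/-- `V^±`: the set of generators and their inverses, identified with `V × Bool`;
`(v, true)` is the generator `v` and `(v, false)` is `v⁻¹`. -/
abbrev Vpm (V : Type*) := V × Bool

/-- The inverse of an element of `V^±`. -/
def pinv (x : Vpm V) : Vpm V := (x.1, !x.2)

/-- The link of a vertex: the set of vertices adjacent to it. -/
def lk (Γ : SimpleGraph V) (v : V) : Set V := {w | Γ.Adj v w}

/-- The star of a vertex: its link together with the vertex itself. -/
def st (Γ : SimpleGraph V) (v : V) : Set V := lk Γ v ∪ {v}

/-- A vertex is principal if no vertex has strictly larger link. -/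
def Principal (Γ : SimpleGraph V) (v : V) : Prop := ¬ ∃ w : V, lk Γ v ⊂ lk Γ w

/-- The relation `u ∼ w`: `lk(u) ⊆ st(w)` and `lk(w) ⊆ st(u)`. -/
def Eqv (Γ : SimpleGraph V) (u w : V) : Prop :=
  lk Γ u ⊆ st Γ w ∧ lk Γ w ⊆ st Γ u

/-- For `S ⊆ V`, the set `S^± ⊆ V^±` of elements with underlying vertex in `S`. -/
def pm (S : Set V) : Set (Vpm V) := {x | x.1 ∈ S}

/-- `u` and `w` lie in the same connected component of `Γ − lk(m)`
(the induced subgraph on the complement of the link of `m`). -/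
def SameComp (Γ : SimpleGraph V) (m u w : V) : Prop :=
  ∃ (hu : u ∈ (lk Γ m)ᶜ) (hw : w ∈ (lk Γ m)ᶜ),
    (Γ.induce ((lk Γ m)ᶜ : Set V)).Reachable ⟨u, hu⟩ ⟨w, hw⟩

/-- The vertex set of the connected component of `u` in `Γ − lk(m)`. -/
def comp (Γ : SimpleGraph V) (m u : V) : Set V := {w | SameComp Γ m u w}

/-- `U ⊆ V^±` is `m`-inseparable if `U = {u}` or `U = {u⁻¹}` for a vertex `u` whose
component in `Γ − lk(m)` is the single vertex `u`, or `U = C^±` for a component `C`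
of `Γ − lk(m)` with more than one vertex. -/
def Inseparable (Γ : SimpleGraph V) (m : Vpm V) (U : Set (Vpm V)) : Prop :=
  (∃ u : V, comp Γ m.1 u = {u} ∧ (U = {(u, true)} ∨ U = {(u, false)})) ∨
  (∃ u : V, u ∈ (lk Γ m.1)ᶜ ∧ comp Γ m.1 u ≠ {u} ∧ U = pm (comp Γ m.1 u))

/-- A `ΓW`-subset based at `m`: a union of `m`-inseparable subsets containing `m`
but not `m⁻¹`. -/
def GWSubset (Γ : SimpleGraph V) (m : Vpm V) (P : Set (Vpm V)) : Prop :=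
  m ∈ P ∧ pinv m ∉ P ∧ ∀ x ∈ P, ∃ U : Set (Vpm V), Inseparable Γ m U ∧ x ∈ U ∧ U ⊆ P

/-- `P* = V^± ∖ lk(m)^± ∖ P`. -/
def pstar (Γ : SimpleGraph V) (m : Vpm V) (P : Set (Vpm V)) : Set (Vpm V) :=
  (pm (lk Γ m.1))ᶜ \ P

/-- A `ΓW`-partition `{P | P* | lk(m)^±}` based at `m`, recorded together with its
base `m` and the side `P` containing `m`; both sides are `ΓW`-subsets with at least
two elements. -/
structure GWPartition (Γ : SimpleGraph V) where
  base : Vpm V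
  P : Set (Vpm V)
  hP : GWSubset Γ base P
  hPstar : GWSubset Γ (pinv base) (pstar Γ base P)
  thickP : 2 ≤ P.ncard
  thickPstar : 2 ≤ (pstar Γ base P).ncard

/-- The side `P*` of a `ΓW`-partition. -/
def GWPartition.Pstar {Γ : SimpleGraph V} (Pa : GWPartition Γ) : Set (Vpm V) :=
  pstar Γ Pa.base Pa.P

/-- The (unordered) pair of sides of a `ΓW`-partition; two `ΓW`-partitions are equal
as partitions exactly when they have the same sides. -/
def sidesOf {Γ : SimpleGraph V} (Pa : GWPartition Γ) : Set (Set (Vpm V)) :=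
  {Pa.P, Pa.Pstar}

/-- A `ΓW`-partition splits a vertex `v` if `v` and `v⁻¹` lie in different sides. -/
def Splits {Γ : SimpleGraph V} (Pa : GWPartition Γ) (v : V) : Prop :=
  ((v, true) ∈ Pa.P ∧ (v, false) ∈ Pa.Pstar) ∨
  ((v, false) ∈ Pa.P ∧ (v, true) ∈ Pa.Pstar)

/-- Compatibility of `ΓW`-partitions: some pair of sides is disjoint, or the
underlying vertices of the bases are adjacent with different stars. -/
def Compatible {Γ : SimpleGraph V} (Pa Qa : GWPartition Γ) : Prop :=
  (Pa.P ∩ Qa.P = ∅ ∨ Pa.P ∩ Qa.Pstar = ∅ ∨ Pa.Pstar ∩ Qa.P = ∅ ∨ Pa.Pstar ∩ Qa.Pstar = ∅) ∨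
  (Γ.Adj Pa.base.1 Qa.base.1 ∧ st Γ Pa.base.1 ≠ st Γ Qa.base.1)

/-- Weak compatibility: some pair of sides is disjoint, or the underlying vertices of
the bases are adjacent (hence distinct). -/
def WeakCompatible {Γ : SimpleGraph V} (Pa Qa : GWPartition Γ) : Prop :=
  (Pa.P ∩ Qa.P = ∅ ∨ Pa.P ∩ Qa.Pstar = ∅ ∨ Pa.Pstar ∩ Qa.P = ∅ ∨ Pa.Pstar ∩ Qa.Pstar = ∅) ∨
  Γ.Adj Pa.base.1 Qa.base.1

/-- A `ΓW`-partition is based at the vertex `u` if it is based at `u` or `u⁻¹`, i.e.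
`lk(u)` equals the link of the recorded base and the partition separates `u` from
`u⁻¹`. -/
def BasedAtVtx {Γ : SimpleGraph V} (Pa : GWPartition Γ) (u : V) : Prop :=
  lk Γ u = lk Γ Pa.base.1 ∧ Splits Pa u

/-- `M(U)`: the largest size of a collection of pairwise distinct, pairwise compatible
`ΓW`-partitions, each based at some element of `U`. -/
noncomputable def M (Γ : SimpleGraph V) (U : Set V) : ℕ :=
  sSup {k : ℕ | ∃ C : Finset (GWPartition Γ), C.card = k ∧
    (∀ Pa ∈ C, Pa.base.1 ∈ U) ∧
    (∀ Pa ∈ C, ∀ Qa ∈ C, Pa ≠ Qa → sidesOf Pa ≠ sidesOf Qa ∧ Compatible Pa Qa)}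

/-- `μ(U)`: the largest size of a collection of pairwise distinct, pairwise weakly
compatible `ΓW`-partitions, each based at some element of `U`. -/
noncomputable def Mweak (Γ : SimpleGraph V) (U : Set V) : ℕ :=
  sSup {k : ℕ | ∃ C : Finset (GWPartition Γ), C.card = k ∧
    (∀ Pa ∈ C, Pa.base.1 ∈ U) ∧
    (∀ Pa ∈ C, ∀ Qa ∈ C, Pa ≠ Qa → sidesOf Pa ≠ sidesOf Qa ∧ WeakCompatible Pa Qa)}

/-- The commutation relations defining the right-angled Artin group `A_Γ`. -/
def Rels (Γ : SimpleGraph V) : Set (FreeGroup V) :=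
  {r | ∃ u w : V, Γ.Adj u w ∧
    r = FreeGroup.of u * FreeGroup.of w * (FreeGroup.of u)⁻¹ * (FreeGroup.of w)⁻¹}

/-- The right-angled Artin group `A_Γ`. -/
abbrev RAAG (Γ : SimpleGraph V) := PresentedGroup (Rels Γ)

/-- The generator of `A_Γ` corresponding to a vertex. -/
def ofv (Γ : SimpleGraph V) (v : V) : RAAG Γ := PresentedGroup.of v

/-- The element of `A_Γ` corresponding to an element of `V^±`. -/
def gen (Γ : SimpleGraph V) (x : Vpm V) : RAAG Γ :=
  if x.2 then ofv Γ x.1 else (ofv Γ x.1)⁻¹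

open scoped Classical in
/-- The image of the generator `v` under the Whitehead automorphism `φ(P, m)`. -/
noncomputable def whImage (Γ : SimpleGraph V) (P : Set (Vpm V)) (m : Vpm V) (v : V) :
    RAAG Γ :=
  if (v, true) ∈ P ∧ (v, false) ∈ P then gen Γ m * ofv Γ v * (gen Γ m)⁻¹
  else if v ≠ m.1 ∧ (v, true) ∈ P ∧ (v, false) ∈ pstar Γ m P then ofv Γ v * (gen Γ m)⁻¹
  else if v ≠ m.1 ∧ (v, false) ∈ P ∧ (v, true) ∈ pstar Γ m P then gen Γ m * ofv Γ v
  else ofv Γ v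

/-- `φ` is the Whitehead automorphism `φ(P, m)`: it sends each generator `v` to
`mvm⁻¹` if `v, v⁻¹ ∈ P`; to `vm⁻¹` if `v ∈ P`, `v⁻¹ ∈ P*`, `v ≠ m^{±1}`; to `mv` if
`v⁻¹ ∈ P`, `v ∈ P*`, `v ≠ m^{±1}`; and to `v` otherwise. -/
def IsWhitehead (Γ : SimpleGraph V) (P : Set (Vpm V)) (m : Vpm V)
    (φ : MulAut (RAAG Γ)) : Prop :=
  ∀ v : V, φ (ofv Γ v) = whImage Γ P m v

/-- An automorphism is inner if it is conjugation by some group element. -/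
def IsInner {G : Type*} [Group G] (φ : MulAut G) : Prop :=
  ∃ g : G, ∀ x, φ x = g * x * g⁻¹

/-- Two automorphisms commute as outer automorphisms iff their commutator is inner. -/
def CommuteOuter {G : Type*} [Group G] (φ ψ : MulAut G) : Prop :=
  IsInner (φ * ψ * φ⁻¹ * ψ⁻¹)

/-- The subgroup of inner automorphisms. -/
def Inn (G : Type*) [Group G] : Subgroup (MulAut G) := (MulAut.conj : G →* MulAut G).range

instance innNormal (G : Type*) [Group G] : (Inn G).Normal := by
  constructor
  intro n hn φ
  obtain ⟨g, rfl⟩ := hn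
  refine ⟨φ g, ?_⟩
  ext x
  simp [MulAut.conj, mul_assoc]

/-- The outer automorphism group `Out(G) = Aut(G)/Inn(G)`. -/
abbrev Out (G : Type*) [Group G] := MulAut G ⧸ Inn G

/-- The projection `Aut(G) → Out(G)`. -/
def toOut (G : Type*) [Group G] : MulAut G →* Out G := QuotientGroup.mk' (Inn G)

/-!
Each `φ(Pᵢ, m)` sends a generator `v` to `m ^ e(v⁻¹) * v * m ^ (-e(v))`, where `e` is the
indicator of `Pᵢ ∖ {m}`. Automorphisms of this shape compose by adding exponent functions, so
they commute, and `∏ φ(Pᵢ, m) ^ nᵢ` has exponent function `∑ nᵢ • 1_{Pᵢ ∖ {m}}`. If this product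
is conjugation by `g`, map `A_Γ` to the affine group of `ℚ` by `m ↦ (x ↦ 2x)`, `lk(m) ↦ 1` and
every other vertex `↦ (x ↦ x + 1)`: an affine conjugate of a translation is a translation, which
forces the exponent function to be constant off `st(m)^±`. Compatible partitions with a common
base have nested sides, and for a strict chain of nonempty proper subsets the indicators together
with the constant function are linearly independent, so every `nᵢ = 0`.
-/

section Chain

variable {ι α : Type*} {T : ι → Set α}

theorem exists_forall_subset_of_chain (hT : ∀ i j, T i ⊆ T j ∨ T j ⊆ T i) {s : Finset ι}
    (hs : s.Nonempty) : ∃ i ∈ s, ∀ j ∈ s, T j ⊆ T i := by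
  obtain ⟨i, hi, hmax⟩ := s.exists_maximalFor T hs
  exact ⟨i, hi, fun j hj => (hT j i).elim id fun h => hmax hj h⟩

theorem exists_mem_forall_notMem_of_ssubset (hT : ∀ i j, T i ⊆ T j ∨ T j ⊆ T i)
    (s : Finset ι) {i : ι} (hi : (T i).Nonempty) :
    ∃ x ∈ T i, ∀ j ∈ s, T j ⊂ T i → x ∉ T j := by
  classical
  by_cases hs : (s.filter (T · ⊂ T i)).Nonempty
  · obtain ⟨j₀, hj₀, hmax⟩ := exists_forall_subset_of_chain hT hs
    obtain ⟨x, hx, hxj₀⟩ := Set.exists_of_ssubset (Finset.mem_filter.1 hj₀).2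
    exact ⟨x, hx, fun j hj hji hxj => hxj₀ (hmax j (Finset.mem_filter.2 ⟨hj, hji⟩) hxj)⟩
  · obtain ⟨x, hx⟩ := hi
    exact ⟨x, hx, fun j hj hji => absurd ⟨j, Finset.mem_filter.2 ⟨hj, hji⟩⟩ hs⟩

/-- Take `i` with `n i ≠ 0` and `T i` maximal: the sum is `n i` at a point of `T i` outside the
smaller `T j`, and `0` at a point of `X` outside `T i`. -/
theorem eq_zero_of_sum_smul_indicator_const [Fintype ι] (hT : ∀ i j, T i ⊆ T j ∨ T j ⊆ T i)
    (hinj : T.Injective) {X : Set α} (hTX : ∀ i, T i ⊆ X) (hne : ∀ i, (T i).Nonempty)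
    (hproper : ∀ i, ∃ z ∈ X, z ∉ T i) (n : ι → ℤ)
    (hconst : ∀ x ∈ X, ∀ y ∈ X,
      (∑ i, n i • (T i).indicator (1 : α → ℤ)) x = (∑ i, n i • (T i).indicator (1 : α → ℤ)) y) :
    n = 0 := by
  classical
  by_contra hn
  set F := ∑ i, n i • (T i).indicator (1 : α → ℤ)
  set S := Finset.univ.filter (n · ≠ 0)
  have hS : S.Nonempty := by
    obtain ⟨i, hi⟩ := Function.ne_iff.1 hn
    exact ⟨i, Finset.mem_filter.2 ⟨Finset.mem_univ i, hi⟩⟩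
  obtain ⟨i, hi, hmax⟩ := Finset.exists_maximalFor T S hS
  have hni : n i ≠ 0 := (Finset.mem_filter.1 hi).2
  have htop : ∀ j, n j ≠ 0 → T i ⊆ T j → j = i := fun j hj hij =>
    hinj (hij.antisymm (hmax (Finset.mem_filter.2 ⟨Finset.mem_univ j, hj⟩) hij)).symm
  have hF : ∀ x, F x = ∑ j, if x ∈ T j then n j else 0 := fun x => by
    simp only [F, Finset.sum_apply, Pi.smul_apply, Set.indicator_apply, Pi.one_apply,
      smul_eq_mul, mul_ite, mul_one, mul_zero]
  obtain ⟨z, hzX, hzi⟩ := hproper i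
  obtain ⟨x, hxi, hxmin⟩ := exists_mem_forall_notMem_of_ssubset hT S (hne i)
  have hFz : F z = 0 := by
    rw [hF]
    refine Finset.sum_eq_zero fun j _ => ite_eq_right_iff.2 fun hzj => ?_
    by_contra hj
    rcases hT i j with hij | hji
    · exact hzi (htop j hj hij ▸ hzj)
    · exact hzi (hji hzj)
  have hFx : F x = n i := by
    rw [hF, Finset.sum_eq_single i (fun j _ hj_ne => ite_eq_right_iff.2 fun hxj => ?_)
      (fun h => (h (Finset.mem_univ i)).elim), if_pos hxi]
    by_contra hj
    rcases hT i j with hij | hji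
    · exact hj_ne (htop j hj hij)
    · exact hxmin j (Finset.mem_filter.2 ⟨Finset.mem_univ j, hj⟩)
        (hji.ssubset_of_ne fun h => hj_ne (hinj h)) hxj
  exact hni (hFx.symm.trans ((hconst x (hTX i hxi) z hzX).trans hFz))

end Chain

section Affine

open AffineEquiv

noncomputable def homothetyTwo : ℚ ≃ᵃ[ℚ] ℚ := homothetyUnitsMulHom 0 (Units.mk0 2 two_ne_zero)

def translateOne : ℚ ≃ᵃ[ℚ] ℚ := constVAdd ℚ ℚ 1

theorem homothetyTwo_zpow_apply (a : ℤ) (x : ℚ) : (homothetyTwo ^ a) x = 2 ^ a * x := by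
  rw [homothetyTwo, ← map_zpow, coe_homothetyUnitsMulHom_apply, AffineMap.homothety_apply]
  simp

theorem conj_translateOne_apply (h : ℚ ≃ᵃ[ℚ] ℚ) (x : ℚ) :
    (h * translateOne * h⁻¹) x = h.linear 1 + x := by
  simp only [coe_mul, Function.comp_apply, translateOne, constVAdd_apply]
  rw [AffineEquiv.map_vadd, inv_def, apply_symm_apply, vadd_eq_add]

/-- Evaluate at `0` and at `2 ^ b`. -/
theorem eq_of_conj_translateOne_eq (h : ℚ ≃ᵃ[ℚ] ℚ) {a b : ℤ}
    (hab : h * translateOne * h⁻¹ = homothetyTwo ^ a * translateOne * homothetyTwo ^ (-b)) :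
    a = b ∧ (2 : ℚ) ^ a = h.linear 1 := by
  have happly (x : ℚ) : h.linear 1 + x = 2 ^ a * (1 + 2 ^ (-b) * x) := by
    rw [← conj_translateOne_apply, hab]
    simp only [coe_mul, Function.comp_apply, homothetyTwo_zpow_apply, translateOne,
      constVAdd_apply, vadd_eq_add]
  have h₀ := happly 0
  have h₁ := happly (2 ^ b)
  rw [zpow_neg, inv_mul_cancel₀ (zpow_ne_zero b two_ne_zero)] at h₁
  simp only [mul_zero, add_zero, mul_one] at h₀
  refine ⟨zpow_right_injective₀ (by norm_num : (0 : ℚ) < 2) (by norm_num) ?_, h₀.symm⟩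
  linear_combination h₀ - h₁

end Affine

section Twist

variable {Γ : SimpleGraph V} {m : Vpm V}

structure IsBaseTwist (Γ : SimpleGraph V) (m : Vpm V) (ψ : MulAut (RAAG Γ)) (e : Vpm V → ℤ) :
    Prop where
  base : ∀ b, e (m.1, b) = 0
  apply_ofv : ∀ v, ψ (ofv Γ v) = gen Γ m ^ e (v, false) * ofv Γ v * gen Γ m ^ (-e (v, true))

namespace IsBaseTwist

variable {ψ ψ' : MulAut (RAAG Γ)} {e e' : Vpm V → ℤ}

theorem apply_gen (h : IsBaseTwist Γ m ψ e) : ψ (gen Γ m) = gen Γ m := by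
  have hm : ψ (ofv Γ m.1) = ofv Γ m.1 := by simp [h.apply_ofv, h.base]
  unfold gen
  split_ifs <;> simp [hm]

theorem ext (h : IsBaseTwist Γ m ψ e) (h' : IsBaseTwist Γ m ψ' e) : ψ = ψ' :=
  MulEquiv.toMonoidHom_injective <| PresentedGroup.ext fun v =>
    (h.apply_ofv v).trans (h'.apply_ofv v).symm

theorem one : IsBaseTwist Γ m 1 0 := ⟨fun _ => rfl, fun v => by simp⟩

theorem mul (h : IsBaseTwist Γ m ψ e) (h' : IsBaseTwist Γ m ψ' e') :
    IsBaseTwist Γ m (ψ * ψ') (e + e') := by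
  refine ⟨fun b => by simp [h.base, h'.base], fun v => ?_⟩
  rw [MulAut.mul_apply, h'.apply_ofv, map_mul, map_mul, map_zpow, map_zpow, h.apply_gen,
    h.apply_ofv, Pi.add_apply, Pi.add_apply, neg_add, zpow_add, zpow_add]
  group

theorem inv (h : IsBaseTwist Γ m ψ e) : IsBaseTwist Γ m ψ⁻¹ (-e) := by
  refine ⟨fun b => by simp [h.base], fun v => ψ.injective ?_⟩
  rw [MulAut.inv_def, MulEquiv.apply_symm_apply, map_mul, map_mul, map_zpow, map_zpow,
    h.apply_gen, h.apply_ofv, Pi.neg_apply, Pi.neg_apply]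
  group

theorem zpow (h : IsBaseTwist Γ m ψ e) (n : ℤ) : IsBaseTwist Γ m (ψ ^ n) (n • e) := by
  induction n using Int.induction_on with
  | zero => simpa using one
  | succ n ih =>
    rw [zpow_add_one, add_smul, one_smul]
    exact ih.mul h
  | pred n ih =>
    rw [zpow_sub_one, sub_smul, one_smul, sub_eq_add_neg]
    exact ih.mul h.inv

theorem list_prod {k : ℕ} {ψ : Fin k → MulAut (RAAG Γ)} {e : Fin k → Vpm V → ℤ}
    (h : ∀ i, IsBaseTwist Γ m (ψ i) (e i)) :
    IsBaseTwist Γ m (List.ofFn ψ).prod (∑ i, e i) := by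
  induction k with
  | zero => simpa using one
  | succ k ih =>
    rw [List.ofFn_succ, List.prod_cons, Fin.sum_univ_succ]
    exact (h 0).mul (ih fun i => h i.succ)

theorem commute (h : IsBaseTwist Γ m ψ e) (h' : IsBaseTwist Γ m ψ' e') : Commute ψ ψ' :=
  (h.mul h').ext (add_comm e e' ▸ h'.mul h)

end IsBaseTwist

theorem commuteOuter_of_commute {G : Type*} [Group G] {φ ψ : MulAut G} (h : Commute φ ψ) :
    CommuteOuter φ ψ :=
  ⟨1, fun x => by simp [h.eq]⟩

end Twist

section AffineRep

variable {Γ : SimpleGraph V} {m : Vpm V}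

open scoped Classical in
/-- The base vertex acts by `x ↦ 2 ^ (±1) x`, so that `gen Γ m` acts by doubling. -/
noncomputable def affineGen (Γ : SimpleGraph V) (m : Vpm V) (u : V) : ℚ ≃ᵃ[ℚ] ℚ :=
  if u ∈ lk Γ m.1 then 1
  else if u = m.1 then (if m.2 then homothetyTwo else homothetyTwo⁻¹)
  else translateOne

theorem affineGen_of_mem_lk {u : V} (hu : u ∈ lk Γ m.1) : affineGen Γ m u = 1 := if_pos hu

theorem affineGen_of_notMem_st {u : V} (hu : u ∉ st Γ m.1) : affineGen Γ m u = translateOne := by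
  simp only [st, Set.mem_union, Set.mem_singleton_iff, not_or] at hu
  simp [affineGen, hu.1, hu.2]

theorem affineGen_commute {u w : V} (huw : Γ.Adj u w) :
    Commute (affineGen Γ m u) (affineGen Γ m w) := by
  by_cases hu : u ∈ lk Γ m.1
  · rw [affineGen_of_mem_lk hu]; exact Commute.one_left _
  by_cases hw : w ∈ lk Γ m.1
  · rw [affineGen_of_mem_lk hw]; exact Commute.one_right _
  have hnotst : ∀ {u w}, Γ.Adj u w → u ∉ lk Γ m.1 → w ∉ lk Γ m.1 → u ∉ st Γ m.1 :=
    fun huw hu hw hust => hust.elim hu fun hum => hw (by simp_all [lk])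
  rw [affineGen_of_notMem_st (hnotst huw hu hw), affineGen_of_notMem_st (hnotst huw.symm hw hu)]

noncomputable def affineRep (Γ : SimpleGraph V) (m : Vpm V) : RAAG Γ →* (ℚ ≃ᵃ[ℚ] ℚ) :=
  PresentedGroup.toGroup (f := affineGen Γ m) <| by
    rintro _ ⟨u, w, huw, rfl⟩
    simp [(affineGen_commute huw).eq]

theorem affineRep_ofv (v : V) : affineRep Γ m (ofv Γ v) = affineGen Γ m v :=
  PresentedGroup.toGroup.of _

theorem affineRep_gen : affineRep Γ m (gen Γ m) = homothetyTwo := by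
  have hm : affineGen Γ m m.1 = if m.2 then homothetyTwo else homothetyTwo⁻¹ := by
    simp [affineGen, lk]
  unfold gen
  split_ifs <;> simp_all [affineRep_ofv]

theorem IsBaseTwist.eq_of_isInner {ψ : MulAut (RAAG Γ)} {e : Vpm V → ℤ}
    (h : IsBaseTwist Γ m ψ e) (hψ : IsInner ψ) :
    ∀ x ∈ (pm (st Γ m.1))ᶜ, ∀ y ∈ (pm (st Γ m.1))ᶜ, e x = e y := by
  obtain ⟨g, hg⟩ := hψ
  have hexp : ∀ v ∉ st Γ m.1, ∀ b, (2 : ℚ) ^ e (v, b) = (affineRep Γ m g).linear 1 := by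
    intro v hv b
    have hconj := congrArg (affineRep Γ m) ((hg (ofv Γ v)).symm.trans (h.apply_ofv v))
    simp only [map_mul, map_inv, map_zpow, affineRep_gen, affineRep_ofv,
      affineGen_of_notMem_st hv] at hconj
    obtain ⟨hsides, hlin⟩ := eq_of_conj_translateOne_eq _ hconj
    cases b
    · exact hlin
    · exact hsides ▸ hlin
  intro x hx y hy
  exact zpow_right_injective₀ (by norm_num : (0 : ℚ) < 2) (by norm_num)
    ((hexp x.1 hx x.2).trans (hexp y.1 hy y.2).symm)

end AffineRep

section Partitions

variable {Γ : SimpleGraph V} {m : Vpm V} {P : Set (Vpm V)}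

theorem eq_or_eq_pinv_of_fst_eq {x y : Vpm V} (h : x.1 = y.1) : x = y ∨ x = pinv y := by
  obtain ⟨x₁, x₂⟩ := x
  obtain ⟨y₁, y₂⟩ := y
  cases x₂ <;> cases y₂ <;> simp_all [pinv]

namespace GWSubset

theorem fst_notMem_lk (hP : GWSubset Γ m P) {x : Vpm V} (hx : x ∈ P) : x.1 ∉ lk Γ m.1 := by
  obtain ⟨U, hU, hxU, -⟩ := hP.2.2 x hx
  rcases hU with ⟨u, hcomp, hU⟩ | ⟨u, -, -, rfl⟩
  · obtain ⟨hu, -⟩ : SameComp Γ m.1 u u := by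
      change u ∈ comp Γ m.1 u
      rw [hcomp]
      rfl
    rcases hU with rfl | rfl <;> rwa [Set.mem_singleton_iff.1 hxU]
  · exact hxU.2.1

theorem eq_of_fst_eq (hP : GWSubset Γ m P) {x : Vpm V} (hx : x ∈ P) (hxm : x.1 = m.1) :
    x = m :=
  (eq_or_eq_pinv_of_fst_eq hxm).resolve_right fun h => hP.2.1 (h ▸ hx)

theorem diff_subset_compl_pm_st (hP : GWSubset Γ m P) : P \ {m} ⊆ (pm (st Γ m.1))ᶜ :=
  fun _ ⟨hx, hxm⟩ hst =>
    hst.elim (hP.fst_notMem_lk hx) fun h => hxm (hP.eq_of_fst_eq hx h)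

end GWSubset

theorem isBaseTwist_of_isWhitehead (hP : GWSubset Γ m P) {φ : MulAut (RAAG Γ)}
    (hφ : IsWhitehead Γ P m φ) : IsBaseTwist Γ m φ ((P \ {m}).indicator 1) := by
  have hbase : ∀ b, (P \ {m}).indicator (1 : Vpm V → ℤ) (m.1, b) = 0 := fun b =>
    Set.indicator_of_notMem (fun h => h.2 (hP.eq_of_fst_eq h.1 rfl)) _
  refine ⟨hbase, fun v => ?_⟩
  rw [hφ v]
  by_cases hvm : v = m.1
  · subst hvm
    have hnot : ¬((m.1, true) ∈ P ∧ (m.1, false) ∈ P) := fun ⟨ht, hf⟩ =>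
      Bool.noConfusion ((congrArg Prod.snd (hP.eq_of_fst_eq ht rfl)).trans
        (congrArg Prod.snd (hP.eq_of_fst_eq hf rfl)).symm)
    simp [whImage, hnot, hbase]
  have hdiff : ∀ b, (v, b) ∈ P \ {m} ↔ (v, b) ∈ P := fun _ =>
    ⟨And.left, fun h => ⟨h, fun he => hvm (congrArg Prod.fst he)⟩⟩
  have hstar : ∀ b, (v, b) ∈ pstar Γ m P ↔ v ∉ lk Γ m.1 ∧ (v, b) ∉ P := fun _ => Iff.rfl
  by_cases hT : (v, true) ∈ P <;> by_cases hF : (v, false) ∈ P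
  · simp [whImage, hdiff, hT, hF]
  · simp [whImage, hdiff, hT, hF, hvm, hstar, hP.fst_notMem_lk hT]
  · simp [whImage, hdiff, hT, hF, hvm, hstar, hP.fst_notMem_lk hF]
  · simp [whImage, hdiff, hT, hF]

end Partitions

namespace GWPartition

variable {Γ : SimpleGraph V} {m : Vpm V} {Pa Qa : GWPartition Γ}

theorem P_subset_of_inter_Pstar_eq_empty (hQa : Qa.base = Pa.base) (h : Pa.P ∩ Qa.Pstar = ∅) :
    Pa.P ⊆ Qa.P := fun x hx => by
  by_contra hxQ
  have hxlk : x.1 ∉ lk Γ Qa.base.1 := hQa ▸ Pa.hP.fst_notMem_lk hx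
  exact Set.eq_empty_iff_forall_notMem.1 h x ⟨hx, hxlk, hxQ⟩

theorem P_subset_or_subset (hQa : Qa.base = Pa.base) (h : Compatible Pa Qa) :
    Pa.P ⊆ Qa.P ∨ Qa.P ⊆ Pa.P := by
  rcases h with (h | h | h | h) | ⟨hadj, -⟩
  · exact absurd h (Set.nonempty_iff_ne_empty.1 ⟨Pa.base, Pa.hP.1, hQa ▸ Qa.hP.1⟩)
  · exact .inl (P_subset_of_inter_Pstar_eq_empty hQa h)
  · exact .inr (P_subset_of_inter_Pstar_eq_empty hQa.symm (Set.inter_comm _ _ ▸ h))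
  · exact absurd h (Set.nonempty_iff_ne_empty.1
      ⟨pinv Pa.base, Pa.hPstar.1, hQa ▸ Qa.hPstar.1⟩)
  · exact absurd (hQa ▸ hadj) (Γ.irrefl)

theorem diff_base_subset_or_subset (hPa : Pa.base = m) (hQa : Qa.base = m)
    (h : Compatible Pa Qa) : Pa.P \ {m} ⊆ Qa.P \ {m} ∨ Qa.P \ {m} ⊆ Pa.P \ {m} :=
  (P_subset_or_subset (hQa.trans hPa.symm) h).imp Set.sdiff_subset_sdiff_left
    Set.sdiff_subset_sdiff_left

theorem sidesOf_eq_of_diff_base_eq (hPa : Pa.base = m) (hQa : Qa.base = m)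
    (h : Pa.P \ {m} = Qa.P \ {m}) : sidesOf Pa = sidesOf Qa := by
  have hP : Pa.P = Qa.P := by
    rw [← Set.insert_eq_of_mem (hPa ▸ Pa.hP.1 : m ∈ Pa.P),
      ← Set.insert_eq_of_mem (hQa ▸ Qa.hP.1 : m ∈ Qa.P), ← Set.insert_sdiff_singleton,
      h, Set.insert_sdiff_singleton]
  simp only [sidesOf, Pstar, hPa, hQa, hP]

theorem diff_base_nonempty (Pa : GWPartition Γ) : (Pa.P \ {Pa.base}).Nonempty := by
  obtain ⟨x, hx, hxm⟩ := Set.exists_ne_of_one_lt_ncard Pa.thickP Pa.base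
  exact ⟨x, hx, hxm⟩

theorem exists_notMem_P (Pa : GWPartition Γ) :
    ∃ z ∈ (pm (st Γ Pa.base.1))ᶜ, z ∉ Pa.P := by
  obtain ⟨z, ⟨hzlk, hzP⟩, hzm⟩ := Set.exists_ne_of_one_lt_ncard Pa.thickPstar (pinv Pa.base)
  refine ⟨z, fun hst => hst.elim hzlk fun h => ?_, hzP⟩
  exact (eq_or_eq_pinv_of_fst_eq h).elim (fun he => hzP (he ▸ Pa.hP.1)) hzm

end GWPartition

theorem stmt6_general {V : Type*} (Γ : SimpleGraph V) (m : Vpm V) (k : ℕ)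
    (Pa : Fin k → GWPartition Γ) (hbase : ∀ i, (Pa i).base = m)
    (hne : ∀ i j, i ≠ j → sidesOf (Pa i) ≠ sidesOf (Pa j))
    (hcomp : ∀ i j, i ≠ j → Compatible (Pa i) (Pa j))
    (φ : Fin k → MulAut (RAAG Γ))
    (hφ : ∀ i, IsWhitehead Γ (Pa i).P m (φ i)) :
    (∀ i j, CommuteOuter (φ i) (φ j)) ∧
    (∀ n : Fin k → ℤ, IsInner (List.ofFn fun i => φ i ^ n i).prod → ∀ i, n i = 0) := by
  have htwist i : IsBaseTwist Γ m (φ i) (((Pa i).P \ {m}).indicator 1) :=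
    isBaseTwist_of_isWhitehead (hbase i ▸ (Pa i).hP) (hφ i)
  refine ⟨fun i j => commuteOuter_of_commute ((htwist i).commute (htwist j)), fun n hinn => ?_⟩
  have hconst := (IsBaseTwist.list_prod fun i => (htwist i).zpow (n i)).eq_of_isInner hinn
  refine congrFun (eq_zero_of_sum_smul_indicator_const (T := fun i => (Pa i).P \ {m})
    (fun i j => ?_) (fun i j hij => ?_) (fun i => ?_) (fun i => ?_) (fun i => ?_) n hconst)
  · rcases eq_or_ne i j with rfl | hij
    · exact .inl subset_rfl
    · exact GWPartition.diff_base_subset_or_subset (hbase i) (hbase j) (hcomp i j hij)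
  · by_contra h
    exact hne i j h (GWPartition.sidesOf_eq_of_diff_base_eq (hbase i) (hbase j) hij)
  · exact (hbase i ▸ (Pa i).hP).diff_subset_compl_pm_st
  · exact hbase i ▸ (Pa i).diff_base_nonempty
  · obtain ⟨z, hz, hzP⟩ := (Pa i).exists_notMem_P
    exact ⟨z, hbase i ▸ hz, fun h => hzP h.1⟩

/-- Distinct pairwise compatible `ΓW`-partitions based at the same `m ∈ V^±` give
Whitehead automorphisms whose images in `Out(A_Γ)` generate a free abelian subgroup
of rank `k`: they pairwise commute as outer automorphisms, and any product
`φ(P₁,m)^{n₁} ⋯ φ(Pₖ,m)^{nₖ}` that is inner has all exponents zero. -/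
theorem stmt6 {V : Type*} [Fintype V] (Γ : SimpleGraph V) (m : Vpm V) (k : ℕ)
    (Pa : Fin k → GWPartition Γ) (hbase : ∀ i, (Pa i).base = m)
    (hne : ∀ i j, i ≠ j → sidesOf (Pa i) ≠ sidesOf (Pa j))
    (hcomp : ∀ i j, i ≠ j → Compatible (Pa i) (Pa j))
    (φ : Fin k → MulAut (RAAG Γ))
    (hφ : ∀ i, IsWhitehead Γ (Pa i).P m (φ i)) :
    (∀ i j, CommuteOuter (φ i) (φ j)) ∧
    (∀ n : Fin k → ℤ, IsInner (List.ofFn fun i => φ i ^ n i).prod → ∀ i, n i = 0) :=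
  stmt6_general Γ m k Pa hbase hne hcomp φ hφ

end GW
end

section
/- Let {𝒫₁, …, 𝒫ₙ} be a pairwise compatible collection of ΓW-partitions based at m ∈ V^± that is maximal among such collections (no ΓW-partition based at m outside the collection is compatible with all its members), and let Pᵢ be the side of 𝒫ᵢ containing m. If 𝒬 is any other ΓW-partition based at m with Q its side containing m, then the image of φ(Q,m) in Out(A_Γ) lies in the subgroup of Out(A_Γ) generated by the images of φ(P₁,m), …, φ(Pₙ,m). -/
/-!
All the `𝒫ᵢ` are based at `m`, so compatibility forces their sides `Pᵢ` to be nested: they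
form a chain. Maximality forces `Q` to be a union of layers of this chain away from `st(m)^±`:
if `z` and `w` lie in the same `Pᵢ` but `Q` separates them, then `m`, the inseparable piece of
`z` and all `Pᵢ` missing `z` form a side of a new `ΓW`-partition compatible with every `𝒫ᵢ`.

Away from `st(m)`, `φ(P, m)` is the twist `v ↦ m^{χ(v⁻¹)} v m^{-χ(v)}` with `χ` the indicator
of `P`; twists compose additively in `χ`, and conjugation by `m` is the twist with `χ ≡ 1`.
The indicator of a union of layers of a finite chain is an integer combination of the
indicators of its members and of the constant `1`, so `φ(Q, m)` is a product of powers of the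
`φ(Pᵢ, m)` and an inner automorphism.
-/

open Set

theorem Set.indicator_inter_eq_zero_or_eq {α M : Type*} [Zero M] {Q R : Set α} (f : α → M)
    (h : ∀ z ∈ R, ∀ w ∈ R, z ∈ Q → w ∈ Q) :
    (Q ∩ R).indicator f = 0 ∨ (Q ∩ R).indicator f = R.indicator f := by
  by_cases hQR : ∃ z ∈ R, z ∈ Q
  · obtain ⟨z, hzR, hzQ⟩ := hQR
    exact .inr (by rw [inter_eq_right.2 fun w hw => h z hzR w hw hzQ])
  · push Not at hQR
    refine .inl ?_
    rw [eq_empty_of_forall_notMem fun z (hz : z ∈ Q ∩ R) => hQR z hz.2 hz.1, indicator_empty']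

theorem Set.eqOn_indicator_inter {α M : Type*} [Zero M] (P Z : Set α) (f : α → M) :
    EqOn ((P ∩ Z).indicator f) (P.indicator f) Z := fun z hz => by
  by_cases hP : z ∈ P
  · rw [indicator_of_mem (mem_inter hP hz), indicator_of_mem hP]
  · rw [indicator_of_notMem (fun h => hP h.1), indicator_of_notMem hP]

theorem Set.indicator_mem_closure_of_isChain {α M : Type*} [AddGroup M] (f : α → M)
    {F : Set (Set α)} (hFfin : F.Finite) (hF : IsChain (· ⊆ ·) F) {U Q : Set α}
    (hFU : ∀ T ∈ F, T ⊆ U) (hQU : Q ⊆ U)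
    (hQ : ∀ z ∈ U, ∀ w ∈ U, (∀ T ∈ F, z ∈ T ↔ w ∈ T) → z ∈ Q → w ∈ Q) :
    Q.indicator f ∈
      AddSubgroup.closure (insert (U.indicator f) ((fun T : Set α => T.indicator f) '' F)) := by
  classical
  -- Peel off the largest member `S` of `F`: induct inside `S`, and use that `Q` is all or
  -- nothing on `U \ S`, which no member of `F` meets.
  lift F to Finset (Set α) using hFfin
  induction F using Finset.strongInduction generalizing U Q with
  | H F ih =>
  rcases F.eq_empty_or_nonempty with rfl | hne
  · rw [← inter_eq_left.2 hQU]
    rcases indicator_inter_eq_zero_or_eq f fun z hz w hw => hQ z hz w hw (by simp) with h | h <;>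
      rw [h]
    exacts [zero_mem _, AddSubgroup.subset_closure (mem_insert _ _)]
  obtain ⟨S, hS, hSmax⟩ := F.exists_maximal hne
  have hTS : ∀ T ∈ F, T ⊆ S := fun T hT =>
    (hF.total hT hS).elim id fun hST => hSmax hT hST
  have hSU := hFU S hS
  have hgen : insert (S.indicator f) ((fun T : Set α => T.indicator f) '' (F.erase S : Set _)) ⊆
      insert (U.indicator f) ((fun T : Set α => T.indicator f) '' F) :=
    insert_subset (mem_insert_of_mem _ (mem_image_of_mem _ (Finset.mem_coe.2 hS)))
      ((image_mono (by simp)).trans (subset_insert _ _))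
  have hin : (Q ∩ S).indicator f ∈ AddSubgroup.closure
      (insert (S.indicator f) ((fun T : Set α => T.indicator f) '' (F.erase S : Set _))) := by
    refine ih _ (Finset.erase_ssubset hS) inter_subset_right (hF.mono (by simp))
      (fun T hT => hTS T (Finset.mem_of_mem_erase hT)) ?_
    rintro z hz w hw hzw ⟨hzQ, -⟩
    refine ⟨hQ z (hSU hz) w (hSU hw) (fun T hT => ?_) hzQ, hw⟩
    by_cases hTS' : T = S
    · subst hTS'; simp [hz, hw]
    · exact hzw T (Finset.mem_erase.2 ⟨hTS', hT⟩)
  have hout : (Q \ S).indicator f = 0 ∨ (Q \ S).indicator f = U.indicator f - S.indicator f := by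
    rw [← indicator_sdiff hSU, ← inter_eq_left.2 hQU, inter_sdiff_assoc]
    refine indicator_inter_eq_zero_or_eq f fun z hz w hw => hQ z hz.1 w hw.1 fun T hT => ?_
    exact iff_of_false (fun h => hz.2 (hTS T hT h)) fun h => hw.2 (hTS T hT h)
  rw [← inter_union_sdiff Q S, indicator_union_of_disjoint disjoint_sdiff_inter.symm]
  refine add_mem (AddSubgroup.closure_mono hgen hin) ?_
  rcases hout with h | h <;> rw [h]
  · exact zero_mem _
  · exact sub_mem (AddSubgroup.subset_closure (mem_insert _ _))
      (AddSubgroup.subset_closure (mem_insert_of_mem _ (mem_image_of_mem _ (Finset.mem_coe.2 hS))))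

namespace GW

variable {V : Type*}

section Pieces

variable {Γ : SimpleGraph V} {m0 u w : V}

lemma sameComp_self (hu : u ∉ lk Γ m0) : SameComp Γ m0 u u :=
  ⟨hu, hu, .refl _⟩

lemma notMem_lk_of_mem_comp (h : w ∈ comp Γ m0 u) : w ∉ lk Γ m0 := h.2.1

lemma comp_eq_of_mem (h : w ∈ comp Γ m0 u) : comp Γ m0 w = comp Γ m0 u := by
  obtain ⟨hu, hw, huw⟩ := h
  ext x
  exact ⟨fun ⟨_, hx, hwx⟩ => ⟨hu, hx, huw.trans hwx⟩,
    fun ⟨_, hx, hux⟩ => ⟨hw, hx, huw.symm.trans hux⟩⟩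

lemma comp_ne_singleton_of_mem (h : w ∈ comp Γ m0 u) (hu : comp Γ m0 u ≠ {u}) :
    comp Γ m0 w ≠ {w} := by
  intro hw
  have hu' : u ∈ comp Γ m0 w := (comp_eq_of_mem h).symm ▸ sameComp_self h.1
  rw [hw, mem_singleton_iff] at hu'
  exact hu (by rw [← comp_eq_of_mem h, hw, hu'])

lemma comp_self_eq_singleton (Γ : SimpleGraph V) (m0 : V) : comp Γ m0 m0 = {m0} := by
  ext w
  refine ⟨fun ⟨_, _, ⟨p⟩⟩ => ?_, fun hw => hw ▸ sameComp_self Γ.irrefl⟩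
  cases p with
  | nil => rfl
  | @cons _ v _ h _ => exact (v.2 h).elim

open scoped Classical in
/-- The `m0`-inseparable set containing `x`; it is empty when `x.1 ∈ lk m0`. -/
noncomputable def piece (Γ : SimpleGraph V) (m0 : V) (x : Vpm V) : Set (Vpm V) :=
  if comp Γ m0 x.1 = {x.1} then {x} else pm (comp Γ m0 x.1)

variable {x y : Vpm V}

lemma mem_piece_self (hx : x.1 ∉ lk Γ m0) : x ∈ piece Γ m0 x := by
  unfold piece
  split_ifs
  exacts [rfl, sameComp_self hx]

lemma fst_notMem_lk_of_mem_piece (hy : y ∈ piece Γ m0 x) : y.1 ∉ lk Γ m0 := by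
  unfold piece at hy
  split_ifs at hy with h
  · rw [mem_singleton_iff.1 hy]
    exact notMem_lk_of_mem_comp (h ▸ rfl : x.1 ∈ comp Γ m0 x.1)
  · exact notMem_lk_of_mem_comp hy

lemma piece_of_fst_eq (h : x.1 = m0) : piece Γ m0 x = {x} := by
  rw [piece, if_pos (by rw [h]; exact comp_self_eq_singleton Γ m0)]

lemma piece_eq_of_mem (hy : y ∈ piece Γ m0 x) : piece Γ m0 y = piece Γ m0 x := by
  unfold piece at hy ⊢
  split_ifs at hy with h
  · rw [mem_singleton_iff.1 hy, if_pos h]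
  · rw [if_neg (comp_ne_singleton_of_mem hy h), if_neg h, comp_eq_of_mem hy]


variable {m : Vpm V} {P : Set (Vpm V)}

lemma Inseparable.eq_piece {U : Set (Vpm V)} (h : Inseparable Γ m U) (hx : x ∈ U) :
    U = piece Γ m.1 x := by
  rcases h with ⟨u, hc, rfl | rfl⟩ | ⟨u, -, hc, rfl⟩
  · rw [mem_singleton_iff.1 hx, piece, if_pos hc]
  · rw [mem_singleton_iff.1 hx, piece, if_pos hc]
  · rw [piece, if_neg (comp_ne_singleton_of_mem hx hc), comp_eq_of_mem hx]

lemma inseparable_piece (hx : x.1 ∉ lk Γ m.1) : Inseparable Γ m (piece Γ m.1 x) := by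
  unfold piece
  split_ifs with h
  · obtain ⟨x1, _ | _⟩ := x
    exacts [.inl ⟨x1, h, .inr rfl⟩, .inl ⟨x1, h, .inl rfl⟩]
  · exact .inr ⟨x.1, hx, h, rfl⟩

theorem gwSubset_iff : GWSubset Γ m P ↔
    m ∈ P ∧ pinv m ∉ P ∧ ∀ x ∈ P, x.1 ∉ lk Γ m.1 ∧ piece Γ m.1 x ⊆ P := by
  refine and_congr_right fun _ => and_congr_right fun _ => forall₂_congr fun x _ => ⟨?_, ?_⟩
  · rintro ⟨U, hU, hxU, hUP⟩
    obtain rfl := hU.eq_piece hxU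
    exact ⟨fst_notMem_lk_of_mem_piece hxU, hUP⟩
  · rintro ⟨hx, hxP⟩
    exact ⟨_, inseparable_piece hx, mem_piece_self hx, hxP⟩

@[simp] lemma pinv_pinv (x : Vpm V) : pinv (pinv x) = x := by
  simp [pinv]

lemma GWSubset.pstar (h : GWSubset Γ m P) : GWSubset Γ (pinv m) (pstar Γ m P) := by
  obtain ⟨hm, hm', hP⟩ := gwSubset_iff.1 h
  refine gwSubset_iff.2 ⟨⟨Γ.irrefl, hm'⟩, fun h' => h'.2 (by rwa [pinv_pinv]), ?_⟩
  rintro x ⟨hx, hxP⟩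
  refine ⟨hx, fun y hy => ⟨fst_notMem_lk_of_mem_piece hy, fun hyP => hxP ?_⟩⟩
  exact (hP y hyP).2 (piece_eq_of_mem hy ▸ mem_piece_self hx)

lemma gwSubset_insert_piece_union {ι : Type*} {s : Set ι} {P : ι → Set (Vpm V)}
    (hP : ∀ i ∈ s, GWSubset Γ m (P i)) (hz : x.1 ∉ st Γ m.1) :
    GWSubset Γ m (insert m (piece Γ m.1 x ∪ ⋃ i ∈ s, P i)) := by
  simp only [st, mem_union, mem_singleton_iff, not_or] at hz
  refine gwSubset_iff.2 ⟨mem_insert _ _, ?_, ?_⟩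
  · simp only [mem_insert_iff, mem_union, mem_iUnion, not_or, not_exists]
    refine ⟨fun h => by simp [pinv, Prod.ext_iff] at h, fun h => hz.2 ?_, fun i hi => (hP i hi).2.1⟩
    have hx : x ∈ piece Γ m.1 (pinv m) := piece_eq_of_mem h ▸ mem_piece_self hz.1
    rw [piece_of_fst_eq (m0 := m.1) (x := pinv m) rfl, mem_singleton_iff] at hx
    rw [hx]
    rfl
  · simp only [mem_insert_iff, mem_union, mem_iUnion]
    rintro y (rfl | hy | ⟨i, hi, hy⟩)
    · rw [piece_of_fst_eq rfl, singleton_subset_iff]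
      exact ⟨Γ.irrefl, mem_insert _ _⟩
    · refine ⟨fst_notMem_lk_of_mem_piece hy, ?_⟩
      rw [piece_eq_of_mem hy]
      exact subset_union_left.trans (subset_insert _ _)
    · obtain ⟨hyl, hyP⟩ := (gwSubset_iff.1 (hP i hi)).2.2 y hy
      exact ⟨hyl, hyP.trans ((subset_biUnion_of_mem hi).trans
        (subset_union_right.trans (subset_insert _ _)))⟩

end Pieces

section Partitions

variable {Γ : SimpleGraph V} {Pa Qa : GWPartition Γ}

lemma Compatible.subset_or_subset (h : Compatible Pa Qa) (hb : Pa.base = Qa.base) :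
    Pa.P ⊆ Qa.P ∨ Qa.P ⊆ Pa.P := by
  have hsub : ∀ {A B : GWPartition Γ}, A.base = B.base → A.P ∩ B.Pstar = ∅ → A.P ⊆ B.P := by
    intro A B hAB h x hx
    by_contra hxB
    have hxl := ((gwSubset_iff.1 A.hP).2.2 x hx).1
    rw [hAB] at hxl
    exact h.subset ⟨hx, hxl, hxB⟩
  rcases h with (h | h | h | h) | ⟨hadj, -⟩
  · exact absurd h (nonempty_iff_ne_empty.1 ⟨Pa.base, Pa.hP.1, hb ▸ Qa.hP.1⟩)
  · exact .inl (hsub hb h)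
  · exact .inr (hsub hb.symm (inter_comm Qa.P _ ▸ h))
  · exact absurd h (nonempty_iff_ne_empty.1 ⟨pinv Pa.base, Pa.hPstar.1, hb ▸ Qa.hPstar.1⟩)
  · exact absurd (hb ▸ hadj) Γ.irrefl

lemma compatible_of_subset (h : Pa.P ⊆ Qa.P) : Compatible Pa Qa :=
  .inl (.inr (.inl (eq_empty_of_forall_notMem fun _ hx => hx.2.2 (h hx.1))))

lemma compatible_of_superset (h : Qa.P ⊆ Pa.P) : Compatible Pa Qa :=
  .inl (.inr (.inr (.inl (eq_empty_of_forall_notMem fun _ hx => hx.1.2 (h hx.2)))))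

lemma exists_gwPartition [Finite V] {m a b : Vpm V} {P : Set (Vpm V)} (hP : GWSubset Γ m P)
    (ha : a ∈ P) (ham : a ≠ m) (hb : b ∈ pstar Γ m P) (hbm : b ≠ pinv m) :
    ∃ R : GWPartition Γ, R.base = m ∧ R.P = P := by
  have two_le {S : Set (Vpm V)} {c d : Vpm V} (hc : c ∈ S) (hd : d ∈ S) (hcd : c ≠ d) :
      2 ≤ S.ncard := (one_lt_ncard_iff).2 ⟨c, d, hc, hd, hcd⟩
  exact ⟨⟨m, P, hP, hP.pstar, two_le hP.1 ha ham.symm, two_le hP.pstar.1 hb hbm.symm⟩, rfl, rfl⟩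

end Partitions

section Maximal

variable {Γ : SimpleGraph V} {m : Vpm V} {ι : Type*} {Pa : ι → GWPartition Γ}

theorem mem_of_forall_mem_iff_of_maximal [Finite V] (hbase : ∀ i, (Pa i).base = m)
    (hnest : ∀ i j, (Pa i).P ⊆ (Pa j).P ∨ (Pa j).P ⊆ (Pa i).P)
    (hmax : ∀ Ra : GWPartition Γ, Ra.base = m →
      (∀ i, Compatible Ra (Pa i)) → ∃ i, sidesOf Ra = sidesOf (Pa i))
    {Q : Set (Vpm V)} (hQ : GWSubset Γ m Q) {z w : Vpm V} (hz : z.1 ∉ st Γ m.1)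
    (hw : w.1 ∉ st Γ m.1) (hzw : ∀ i, z ∈ (Pa i).P ↔ w ∈ (Pa i).P) (hzQ : z ∈ Q) : w ∈ Q := by
  by_contra hwQ
  have hPa : ∀ i, GWSubset Γ m (Pa i).P := fun i => hbase i ▸ (Pa i).hP
  set R := insert m (piece Γ m.1 z ∪ ⋃ i ∈ {i | z ∉ (Pa i).P}, (Pa i).P)
  have hR : GWSubset Γ m R := gwSubset_insert_piece_union (fun i _ => hPa i) hz
  simp only [st, mem_union, mem_singleton_iff, not_or] at hz hw
  have hzR : z ∈ R := .inr (.inl (mem_piece_self hz.1))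
  have hwR : w ∉ R := by
    simp only [R, mem_insert_iff, mem_union, mem_iUnion, not_or, not_exists]
    exact ⟨fun h => hw.2 (congrArg Prod.fst h), fun h => hwQ (((gwSubset_iff.1 hQ).2.2 z hzQ).2 h),
      fun i hi => hi ∘ (hzw i).2⟩
  obtain ⟨Ra, hRa, hRaP⟩ := exists_gwPartition hR hzR (fun h => hz.2 (congrArg Prod.fst h))
    ⟨hw.1, hwR⟩ (fun h => hw.2 (by rw [h]; rfl))
  have hcomp : ∀ i, Compatible Ra (Pa i) := by
    intro i
    by_cases hzi : z ∈ (Pa i).P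
    · refine compatible_of_subset (hRaP ▸ insert_subset (hPa i).1 (union_subset
        ((gwSubset_iff.1 (hPa i)).2.2 z hzi).2 (iUnion₂_subset fun j hj => ?_)))
      exact (hnest j i).resolve_right fun h => hj (h hzi)
    · exact compatible_of_superset (hRaP ▸
        (subset_biUnion_of_mem (u := fun j => (Pa j).P) hzi).trans
          (subset_union_right.trans (subset_insert _ _)))
  obtain ⟨i, hi⟩ := hmax Ra hRa hcomp
  rcases (hi ▸ mem_insert _ _ : Ra.P ∈ sidesOf (Pa i)) with h | h
  · rw [← hRaP, h] at hzR hwR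
    exact hwR ((hzw i).1 hzR)
  · have hmR : m ∈ Ra.P := hRaP ▸ mem_insert _ _
    rw [mem_singleton_iff.1 h] at hmR
    exact hmR.2 (hPa i).1

theorem indicator_mem_closure_of_maximal [Finite V] [Finite ι] (hbase : ∀ i, (Pa i).base = m)
    (hnest : ∀ i j, (Pa i).P ⊆ (Pa j).P ∨ (Pa j).P ⊆ (Pa i).P)
    (hmax : ∀ Ra : GWPartition Γ, Ra.base = m →
      (∀ i, Compatible Ra (Pa i)) → ∃ i, sidesOf Ra = sidesOf (Pa i))
    {Q : Set (Vpm V)} (hQ : GWSubset Γ m Q) :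
    (Q ∩ (pm (st Γ m.1))ᶜ).indicator 1 ∈ AddSubgroup.closure
      (insert ((pm (st Γ m.1))ᶜ.indicator (1 : Vpm V → ℤ))
        ((fun T => T.indicator 1) '' range fun i => (Pa i).P ∩ (pm (st Γ m.1))ᶜ)) := by
  refine indicator_mem_closure_of_isChain _ (finite_range _) ?_ ?_ inter_subset_right ?_
  · rintro _ ⟨i, rfl⟩ _ ⟨j, rfl⟩ -
    exact (hnest i j).imp (inter_subset_inter_left _) (inter_subset_inter_left _)
  · rintro _ ⟨i, rfl⟩
    exact inter_subset_right
  · rintro z hz w hw hzw ⟨hzQ, -⟩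
    refine ⟨mem_of_forall_mem_iff_of_maximal hbase hnest hmax hQ hz hw (fun i => ?_) hzQ, hw⟩
    exact (and_iff_left hz).symm.trans ((hzw _ ⟨i, rfl⟩).trans (and_iff_left hw))

end Maximal

section Twist

variable {Γ : SimpleGraph V}

lemma commute_ofv {u v : V} (h : Γ.Adj u v) : Commute (ofv Γ u) (ofv Γ v) := by
  have h1 := PresentedGroup.one_of_mem (rels := Rels Γ) ⟨u, v, h, rfl⟩
  simp only [map_mul, map_inv] at h1
  exact mul_inv_eq_iff_eq_mul.1 (mul_inv_eq_one.1 h1)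

lemma commute_gen_of_mem_st {m : Vpm V} {v : V} (hv : v ∈ st Γ m.1) :
    Commute (gen Γ m) (ofv Γ v) := by
  have h : Commute (ofv Γ m.1) (ofv Γ v) := by
    rcases hv with hv | rfl
    exacts [commute_ofv hv, .refl _]
  unfold gen
  split_ifs
  exacts [h, h.inv_left]

structure IsTwist (Γ : SimpleGraph V) (m : Vpm V) (x : Vpm V → ℤ) (φ : MulAut (RAAG Γ)) :
    Prop where
  map_of_mem_st : ∀ v ∈ st Γ m.1, φ (ofv Γ v) = ofv Γ v
  map_of_notMem_st : ∀ v ∉ st Γ m.1,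
    φ (ofv Γ v) = gen Γ m ^ x (v, false) * ofv Γ v * gen Γ m ^ (-x (v, true))

variable {m : Vpm V} {x y : Vpm V → ℤ} {φ ψ : MulAut (RAAG Γ)}

lemma IsTwist.map_gen (h : IsTwist Γ m x φ) : φ (gen Γ m) = gen Γ m := by
  have hm := h.map_of_mem_st m.1 (mem_union_right _ rfl)
  unfold gen
  split_ifs <;> simp [hm]

lemma isTwist_one : IsTwist Γ m 0 1 :=
  ⟨fun _ _ => rfl, fun v _ => by simp⟩

lemma IsTwist.mul (hφ : IsTwist Γ m x φ) (hψ : IsTwist Γ m y ψ) :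
    IsTwist Γ m (x + y) (φ * ψ) := by
  refine ⟨fun v hv => ?_, fun v hv => ?_⟩
  · rw [MulAut.mul_apply, hψ.1 v hv, hφ.1 v hv]
  · rw [MulAut.mul_apply, hψ.2 v hv, map_mul, map_mul, map_zpow, map_zpow, hφ.map_gen, hφ.2 v hv]
    simp only [Pi.add_apply]
    group

lemma IsTwist.inv (h : IsTwist Γ m x φ) : IsTwist Γ m (-x) φ⁻¹ := by
  refine ⟨fun v hv => φ.injective ?_, fun v hv => φ.injective ?_⟩
  · rw [MulAut.apply_inv_self, h.1 v hv]
  · rw [MulAut.apply_inv_self, map_mul, map_mul, map_zpow, map_zpow, h.map_gen, h.2 v hv]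
    simp only [Pi.neg_apply]
    group

lemma isTwist_conj (Γ : SimpleGraph V) (m : Vpm V) : IsTwist Γ m 1 (MulAut.conj (gen Γ m)) := by
  refine ⟨fun v hv => ?_, fun v _ => ?_⟩ <;> rw [MulAut.conj_apply]
  · rw [(commute_gen_of_mem_st hv).eq, mul_inv_cancel_right]
  · simp

lemma IsTwist.congr (h : IsTwist Γ m x φ) (hxy : EqOn x y (pm (st Γ m.1))ᶜ) : IsTwist Γ m y φ :=
  ⟨h.1, fun v hv => by rw [h.2 v hv, hxy hv, hxy hv]⟩

lemma IsTwist.unique (hφ : IsTwist Γ m x φ) (hψ : IsTwist Γ m x ψ) : φ = ψ := by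
  refine MulEquiv.toMonoidHom_injective (PresentedGroup.ext fun v => ?_)
  by_cases hv : v ∈ st Γ m.1
  · exact (hφ.1 v hv).trans (hψ.1 v hv).symm
  · exact (hφ.2 v hv).trans (hψ.2 v hv).symm

lemma isTwist_whitehead {P : Set (Vpm V)} (hP : GWSubset Γ m P) (hφ : IsWhitehead Γ P m φ) :
    IsTwist Γ m (P.indicator 1) φ := by
  obtain ⟨hm, hm', hPl⟩ := gwSubset_iff.1 hP
  refine ⟨fun v hv => ?_, fun v hv => ?_⟩
  · rw [hφ v, whImage]
    rcases hv with hv | rfl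
    · have hT : (v, true) ∉ P := fun h => (hPl _ h).1 hv
      have hF : (v, false) ∉ P := fun h => (hPl _ h).1 hv
      simp [hT, hF]
    · have : ¬ ((m.1, true) ∈ P ∧ (m.1, false) ∈ P) := by
        obtain ⟨m1, _ | _⟩ := m <;> simp_all [pinv]
      simp [this]
  · simp only [st, mem_union, mem_singleton_iff, not_or] at hv
    have hstar : ∀ b, (v, b) ∈ pstar Γ m P ↔ (v, b) ∉ P := fun b => and_iff_right hv.1
    rw [hφ v, whImage]
    by_cases hT : (v, true) ∈ P <;> by_cases hF : (v, false) ∈ P <;> simp [hT, hF, hstar, hv.2]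

def twistSubgroup (Γ : SimpleGraph V) (m : Vpm V) (H : Subgroup (Out (RAAG Γ))) :
    AddSubgroup (Vpm V → ℤ) where
  carrier := {x | ∃ φ, IsTwist Γ m x φ ∧ toOut _ φ ∈ H}
  add_mem' := fun ⟨φ, hφ, hφH⟩ ⟨ψ, hψ, hψH⟩ =>
    ⟨φ * ψ, hφ.mul hψ, by rw [map_mul]; exact mul_mem hφH hψH⟩
  zero_mem' := ⟨1, isTwist_one, by rw [map_one]; exact one_mem H⟩
  neg_mem' := fun ⟨φ, hφ, hφH⟩ => ⟨φ⁻¹, hφ.inv, by rw [map_inv]; exact inv_mem hφH⟩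

variable {H : Subgroup (Out (RAAG Γ))}

lemma toOut_conj {G : Type*} [Group G] (g : G) : toOut G (MulAut.conj g) = 1 :=
  (QuotientGroup.eq_one_iff _).2 ⟨g, rfl⟩

lemma one_mem_twistSubgroup : 1 ∈ twistSubgroup Γ m H :=
  ⟨_, isTwist_conj Γ m, (toOut_conj (gen Γ m)).symm ▸ one_mem H⟩

lemma mem_twistSubgroup_of_eqOn (hx : x ∈ twistSubgroup Γ m H) (hxy : EqOn x y (pm (st Γ m.1))ᶜ) :
    y ∈ twistSubgroup Γ m H :=
  let ⟨φ, hφ, hφH⟩ := hx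
  ⟨φ, hφ.congr hxy, hφH⟩

end Twist

theorem stmt7_general {V : Type*} [Fintype V] (Γ : SimpleGraph V) (m : Vpm V) (n : ℕ)
    (Pa : Fin n → GWPartition Γ) (hbase : ∀ i, (Pa i).base = m)
    (hcomp : ∀ i j, i ≠ j → Compatible (Pa i) (Pa j))
    (hmax : ∀ Ra : GWPartition Γ, Ra.base = m →
      (∀ i, Compatible Ra (Pa i)) → ∃ i, sidesOf Ra = sidesOf (Pa i))
    (Qa : GWPartition Γ) (hQa : Qa.base = m)
    (φ : Fin n → MulAut (RAAG Γ)) (hφ : ∀ i, IsWhitehead Γ (Pa i).P m (φ i))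
    (ψ : MulAut (RAAG Γ)) (hψ : IsWhitehead Γ Qa.P m ψ) :
    toOut (RAAG Γ) ψ ∈
      Subgroup.closure (Set.range fun i => toOut (RAAG Γ) (φ i)) := by
  have hPa : ∀ i, GWSubset Γ m (Pa i).P := fun i => hbase i ▸ (Pa i).hP
  have hQ : GWSubset Γ m Qa.P := hQa ▸ Qa.hP
  have hnest : ∀ i j, (Pa i).P ⊆ (Pa j).P ∨ (Pa j).P ⊆ (Pa i).P := fun i j =>
    if hij : i = j then .inl (hij ▸ subset_rfl)
    else (hcomp i j hij).subset_or_subset ((hbase i).trans (hbase j).symm)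
  have hQZ := indicator_mem_closure_of_maximal hbase hnest hmax hQ
  suffices hQt : Qa.P.indicator 1 ∈
      twistSubgroup Γ m (Subgroup.closure (Set.range fun i => toOut (RAAG Γ) (φ i))) by
    obtain ⟨ψ', hψ', hψ'H⟩ := hQt
    rwa [(isTwist_whitehead hQ hψ).unique hψ']
  refine mem_twistSubgroup_of_eqOn ((AddSubgroup.closure_le _).2 ?_ hQZ) (eqOn_indicator_inter ..)
  rintro _ (rfl | ⟨_, ⟨i, rfl⟩, rfl⟩)
  · exact mem_twistSubgroup_of_eqOn one_mem_twistSubgroup fun z hz => (indicator_of_mem hz _).symm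
  · exact mem_twistSubgroup_of_eqOn ⟨φ i, isTwist_whitehead (hPa i) (hφ i),
      Subgroup.subset_closure ⟨i, rfl⟩⟩ (eqOn_indicator_inter ..).symm

/-- If `{Pa 1, …, Pa n}` is a maximal pairwise compatible collection of
`ΓW`-partitions based at `m` and `Qa` is another `ΓW`-partition based at `m`, then
the image of `φ(Q,m)` in `Out(A_Γ)` lies in the subgroup generated by the images of
the `φ(Pᵢ,m)`. -/
theorem stmt7 {V : Type*} [Fintype V] (Γ : SimpleGraph V) (m : Vpm V) (n : ℕ)
    (Pa : Fin n → GWPartition Γ) (hbase : ∀ i, (Pa i).base = m)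
    (hcomp : ∀ i j, i ≠ j → Compatible (Pa i) (Pa j))
    (hmax : ∀ Ra : GWPartition Γ, Ra.base = m →
      (∀ i, Compatible Ra (Pa i)) → ∃ i, sidesOf Ra = sidesOf (Pa i))
    (Qa : GWPartition Γ) (hQa : Qa.base = m)
    (hother : ∀ i, sidesOf Qa ≠ sidesOf (Pa i))
    (φ : Fin n → MulAut (RAAG Γ)) (hφ : ∀ i, IsWhitehead Γ (Pa i).P m (φ i))
    (ψ : MulAut (RAAG Γ)) (hψ : IsWhitehead Γ Qa.P m ψ) :
    toOut (RAAG Γ) ψ ∈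
      Subgroup.closure (Set.range fun i => toOut (RAAG Γ) (φ i)) :=
  stmt7_general Γ m n Pa hbase hcomp hmax Qa hQa φ hφ ψ hψ

end GW
end

section
/- Let [m] be an abelian equivalence class of vertices of Γ and let {𝒫₁, …, 𝒫ₖ} be a pairwise compatible collection of distinct ΓW-partitions, where 𝒫ᵢ is based at mᵢ ∈ V^± whose underlying vertex lies in [m], and Pᵢ is the side of 𝒫ᵢ containing mᵢ. Then the images of φ(P₁,m₁), …, φ(Pₖ,mₖ) in Out(A_Γ) generate a free abelian subgroup of rank k: they pairwise commute as outer automorphisms, and for any integers n₁, …, nₖ, if φ(P₁,m₁)^{n₁} ∘ ⋯ ∘ φ(Pₖ,mₖ)^{nₖ} is an inner automorphism of A_Γ then n₁ = ⋯ = nₖ = 0. -/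
section MulAut

variable {G : Type*} [Group G]

lemma MulAut.zpow_apply_eq_self {ψ : MulAut G} {g : G} (hg : ψ g = g) (z : ℤ) :
    (ψ ^ z) g = g := by
  have := Equiv.Perm.zpow_apply_eq_self_of_apply_eq_self (f := MulAut.toPerm G ψ) hg z
  rwa [← map_zpow] at this

lemma MulAut.inv_apply_of_apply_eq {ψ : MulAut G} {g x : G} {α β : ℤ} (hg : ψ g = g)
    (hx : ψ x = g ^ α * x * g ^ β) : ψ⁻¹ x = g ^ (-α) * x * g ^ (-β) := by
  rw [MulAut.inv_apply, MulEquiv.symm_apply_eq, map_mul, map_mul, map_zpow, map_zpow, hg, hx]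
  group

lemma MulAut.zpow_apply_of_apply_eq {ψ : MulAut G} {g x : G} {α β : ℤ} (hg : ψ g = g)
    (hx : ψ x = g ^ α * x * g ^ β) (z : ℤ) : (ψ ^ z) x = g ^ (z * α) * x * g ^ (z * β) := by
  induction z using Int.induction_on with
  | zero => simp
  | succ z ih =>
    rw [zpow_add_one, MulAut.mul_apply, hx, map_mul, map_mul, map_zpow, map_zpow,
      MulAut.zpow_apply_eq_self hg, ih]
    group
  | pred z ih =>
    rw [zpow_sub_one, MulAut.mul_apply, MulAut.inv_apply_of_apply_eq hg hx, map_mul, map_mul,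
      map_zpow, map_zpow, MulAut.zpow_apply_eq_self hg, ih]
    group

lemma MulAut.apply_apply_comm {φ ψ : MulAut G} {g h x : G} {α β γ δ : ℤ} (hφh : φ h = h)
    (hψg : ψ g = g) (hgh : Commute g h) (hφx : φ x = g ^ α * x * g ^ β)
    (hψx : ψ x = h ^ γ * x * h ^ δ) : φ (ψ x) = ψ (φ x) := by
  rw [hψx, hφx, map_mul, map_mul, map_mul, map_mul, map_zpow, map_zpow, map_zpow, map_zpow,
    hφh, hψg, hφx, hψx]
  calc h ^ γ * (g ^ α * x * g ^ β) * h ^ δ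
      = (h ^ γ * g ^ α) * x * (g ^ β * h ^ δ) := by group
    _ = (g ^ α * h ^ γ) * x * (h ^ δ * g ^ β) := by
      rw [(hgh.zpow_zpow α γ).eq, (hgh.zpow_zpow β δ).eq]
    _ = g ^ α * (h ^ γ * x * h ^ δ) * g ^ β := by group

lemma MulAut.list_prod_zpow_apply {ι : Type*} {g : ι → G} {φ : ι → MulAut G}
    (hcomm : ∀ i j, Commute (g i) (g j)) (hfix : ∀ i j, φ i (g j) = g j) {x : G} {α β : ι → ℤ}
    (hx : ∀ i, φ i x = g i ^ α i * x * g i ^ β i) (n : ι → ℤ) (l : List ι) :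
    (l.map fun i => φ i ^ n i).prod x =
      (l.map fun i => g i ^ (n i * α i)).prod * x * (l.map fun i => g i ^ (n i * β i)).prod := by
  induction l with
  | nil => simp
  | cons i l ih =>
    have hfix' (e : ι → ℤ) :
        (φ i ^ n i) (l.map fun j => g j ^ e j).prod = (l.map fun j => g j ^ e j).prod := by
      rw [map_list_prod, List.map_map]
      congr 1
      exact List.map_congr_left fun j _ => by
        simp [map_zpow, MulAut.zpow_apply_eq_self (hfix i j)]
    have hc : Commute (g i ^ (n i * α i)) (l.map fun j => g j ^ (n j * α j)).prod :=
      Commute.list_prod_right _ _ fun y hy => by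
        obtain ⟨j, -, rfl⟩ := List.mem_map.1 hy
        exact (hcomm i j).zpow_zpow _ _
    simp only [List.map_cons, List.prod_cons, MulAut.mul_apply, ih, map_mul, hfix',
      MulAut.zpow_apply_of_apply_eq (hfix i i) (hx i)]
    rw [hc.eq]
    group

lemma List.prod_ofFn_zpow (t : G) {k : ℕ} (e : Fin k → ℤ) :
    (List.ofFn fun i => t ^ e i).prod = t ^ ∑ i, e i := by
  induction k with
  | zero => simp
  | succ k ih => rw [List.ofFn_succ, List.prod_cons, ih, Fin.sum_univ_succ, zpow_add]

lemma commuteOuter_of_mul_comm {φ ψ : MulAut G} (h : φ * ψ = ψ * φ) : GW.CommuteOuter φ ψ :=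
  ⟨1, fun x => by simp [h]⟩

end MulAut

section Chain

variable {X ι : Type*} {Q : ι → Set X}

lemma exists_forall_subset_of_chain {J : Finset ι} (hJ : J.Nonempty)
    (hchain : ∀ i ∈ J, ∀ j ∈ J, Q i ⊆ Q j ∨ Q j ⊆ Q i) : ∃ i ∈ J, ∀ j ∈ J, Q i ⊆ Q j := by
  obtain ⟨i, hi, hmin⟩ := J.exists_minimalFor Q hJ
  exact ⟨i, hi, fun j hj => (hchain i hi j hj).elim id (hmin hj)⟩

lemma eq_zero_of_sum_indicator_eq {J : Finset ι} {D : Set X} {n : ι → ℤ}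
    (hchain : ∀ i ∈ J, ∀ j ∈ J, Q i ⊆ Q j ∨ Q j ⊆ Q i) (hinj : Set.InjOn Q J)
    (hbot : ∀ i ∈ J, (Q i ∩ D).Nonempty)
    (hgap : ∀ i ∈ J, ∀ j ∈ J, Q i ⊂ Q j → (Q j \ Q i ∩ D).Nonempty)
    (htop : ∀ i ∈ J, (D \ Q i).Nonempty)
    (hsum : ∀ x ∈ D, ∀ y ∈ D,
      ∑ j ∈ J, n j * (Q j).indicator 1 x = ∑ j ∈ J, n j * (Q j).indicator 1 y) :
    ∀ j ∈ J, n j = 0 := by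
  classical
  suffices h : ∀ J' ⊆ J, (∀ x ∈ D, ∀ y ∈ D,
      ∑ j ∈ J', n j * (Q j).indicator 1 x = ∑ j ∈ J', n j * (Q j).indicator 1 y) →
      ∀ j ∈ J', n j = 0 from h J subset_rfl hsum
  intro J' hJ'
  induction J' using Finset.strongInduction with
  | H J' ih =>
  intro hsum' j hj
  have hchain' : ∀ i ∈ J', ∀ j ∈ J', Q i ⊆ Q j ∨ Q j ⊆ Q i :=
    fun i hi j hj => hchain i (hJ' hi) j (hJ' hj)
  obtain ⟨i₀, hi₀, hleast⟩ := exists_forall_subset_of_chain ⟨j, hj⟩ hchain'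
  -- `x` is in every `Q j` and `y` in all but `Q i₀`, so the two sums differ by `n i₀`.
  obtain ⟨x, hxQ, hxD⟩ := hbot i₀ (hJ' hi₀)
  obtain ⟨y, hyD, hyQ, hyJ⟩ : ∃ y ∈ D, y ∉ Q i₀ ∧ ∀ j ∈ J'.erase i₀, y ∈ Q j := by
    rcases (J'.erase i₀).eq_empty_or_nonempty with hJ₀ | hJ₀
    · obtain ⟨y, hyD, hyQ⟩ := htop i₀ (hJ' hi₀)
      exact ⟨y, hyD, hyQ, by simp [hJ₀]⟩
    · obtain ⟨i₁, hi₁, hleast₁⟩ := exists_forall_subset_of_chain hJ₀ fun i hi j hj =>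
        hchain' i (Finset.mem_of_mem_erase hi) j (Finset.mem_of_mem_erase hj)
      have hi₁' := Finset.mem_of_mem_erase hi₁
      have hss : Q i₀ ⊂ Q i₁ := (hleast i₁ hi₁').ssubset_of_ne fun h =>
        Finset.ne_of_mem_erase hi₁ (hinj (hJ' hi₁') (hJ' hi₀) h.symm)
      obtain ⟨y, ⟨hy₁, hy₀⟩, hyD⟩ := hgap i₀ (hJ' hi₀) i₁ (hJ' hi₁') hss
      exact ⟨y, hyD, hy₀, fun j hj => hleast₁ j hj hy₁⟩
  have hn₀ : n i₀ = 0 := by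
    have hx' : ∑ j ∈ J'.erase i₀, n j * (Q j).indicator 1 x = ∑ j ∈ J'.erase i₀, n j :=
      Finset.sum_congr rfl fun j hj => by
        simp [Set.indicator_of_mem (hleast j (Finset.mem_of_mem_erase hj) hxQ)]
    have hy' : ∑ j ∈ J'.erase i₀, n j * (Q j).indicator 1 y = ∑ j ∈ J'.erase i₀, n j :=
      Finset.sum_congr rfl fun j hj => by simp [Set.indicator_of_mem (hyJ j hj)]
    have h := hsum' x hxD y hyD
    rw [← Finset.add_sum_erase J' _ hi₀, ← Finset.add_sum_erase J' _ hi₀, hx', hy',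
      Set.indicator_of_mem hxQ, Set.indicator_of_notMem hyQ] at h
    simpa using h
  rcases eq_or_ne j i₀ with rfl | hne
  · exact hn₀
  refine ih _ (Finset.erase_ssubset hi₀) ((J'.erase_subset i₀).trans hJ') (fun x hx y hy => ?_) j
    (Finset.mem_erase.2 ⟨hne, hj⟩)
  have h := hsum' x hx y hy
  rwa [← Finset.add_sum_erase J' _ hi₀, ← Finset.add_sum_erase J' _ hi₀, hn₀, zero_mul,
    zero_mul, zero_add, zero_add] at h

end Chain

namespace GW

variable {V : Type*}

section AffineLine

noncomputable def dil : ℚ ≃ᵃ[ℚ] ℚ := AffineEquiv.homothetyUnitsMulHom 0 (Units.mk0 2 two_ne_zero)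

noncomputable def shift : ℚ ≃ᵃ[ℚ] ℚ := AffineEquiv.constVAdd ℚ ℚ 1

lemma dil_zpow_apply (z : ℤ) (x : ℚ) : (dil ^ z) x = 2 ^ z * x := by
  simp [dil, ← map_zpow, AffineMap.homothety_apply]

lemma shift_apply (x : ℚ) : shift x = 1 + x := rfl

lemma conj_shift_apply (h : ℚ ≃ᵃ[ℚ] ℚ) (x : ℚ) : (h * shift * h⁻¹) x = h.linear 1 + x := by
  rw [AffineEquiv.coe_mul, AffineEquiv.coe_mul, Function.comp_apply, Function.comp_apply,
    shift_apply, ← vadd_eq_add, AffineEquiv.map_vadd]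
  simp [AffineEquiv.inv_def]

lemma exponents_of_eq_conj_shift {A B : ℤ} {h : ℚ ≃ᵃ[ℚ] ℚ}
    (H : dil ^ A * shift * dil ^ B = h * shift * h⁻¹) : (2 : ℚ) ^ A = h.linear 1 ∧ A + B = 0 := by
  have hx (x : ℚ) : 2 ^ A * (1 + 2 ^ B * x) = h.linear 1 + x := by
    simpa [dil_zpow_apply, shift_apply, conj_shift_apply] using DFunLike.congr_fun H x
  have h0 : (2 : ℚ) ^ A = h.linear 1 := by simpa using hx 0
  refine ⟨h0, (zpow_right_inj₀ (a := (2 : ℚ)) two_pos (by norm_num)).1 ?_⟩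
  rw [zpow_add₀ two_ne_zero, zpow_zero]
  linear_combination hx 1 - h0

end AffineLine

section RAAG

variable {Γ : SimpleGraph V}

lemma mem_st_iff {u w : V} : u ∈ st Γ w ↔ Γ.Adj w u ∨ u = w := Iff.rfl

lemma adj_or_eq_of_st_eq {u w : V} (h : st Γ u = st Γ w) : Γ.Adj u w ∨ u = w :=
  (mem_st_iff.1 (h ▸ Or.inr rfl : w ∈ st Γ u)).imp_right Eq.symm

open scoped commutatorElement in
lemma ofv_commute_of_adj {u w : V} (h : Γ.Adj u w) : Commute (ofv Γ u) (ofv Γ w) :=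
  commutatorElement_eq_one_iff_commute.1 (PresentedGroup.one_of_mem ⟨u, w, h, rfl⟩)

lemma RAAG.mulAut_ext {φ ψ : MulAut (RAAG Γ)} (h : ∀ v, φ (ofv Γ v) = ψ (ofv Γ v)) : φ = ψ :=
  MulEquiv.toMonoidHom_injective (PresentedGroup.ext h)

def sgn (x : Vpm V) : ℤ := if x.2 then 1 else -1

lemma gen_eq_zpow (x : Vpm V) : gen Γ x = ofv Γ x.1 ^ sgn x := by
  unfold gen sgn; split_ifs <;> simp

lemma gen_commute {x y : Vpm V} (h : Γ.Adj x.1 y.1 ∨ x.1 = y.1) :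
    Commute (gen Γ x) (gen Γ y) := by
  rw [gen_eq_zpow, gen_eq_zpow]
  rcases h with h | h
  · exact (ofv_commute_of_adj h).zpow_zpow _ _
  · rw [h]; exact (Commute.refl _).zpow_zpow _ _

end RAAG

section ToAff

variable {Γ : SimpleGraph V}

open scoped Classical in
noncomputable def affGen (Γ : SimpleGraph V) (a u : V) : ℚ ≃ᵃ[ℚ] ℚ :=
  if u = a then dil else if Γ.Adj a u then 1 else shift

lemma affGen_commute {a u w : V} (h : Γ.Adj u w) : Commute (affGen Γ a u) (affGen Γ a w) := by
  unfold affGen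
  split_ifs <;> subst_vars <;> first
    | exact .refl _ | exact .one_left _ | exact .one_right _
    | exact absurd h ‹_› | exact absurd h.symm ‹_›

open scoped commutatorElement in
noncomputable def toAff (Γ : SimpleGraph V) (a : V) : RAAG Γ →* ℚ ≃ᵃ[ℚ] ℚ :=
  PresentedGroup.toGroup (f := affGen Γ a) <| by
    rintro _ ⟨u, w, h, rfl⟩
    simpa [commutatorElement_def] using commutatorElement_eq_one_iff_commute.2 (affGen_commute h)

variable {a : V}

lemma toAff_ofv (u : V) : toAff Γ a (ofv Γ u) = affGen Γ a u := PresentedGroup.toGroup.of _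

lemma toAff_ofv_of_notMem_st {v : V} (hv : v ∉ st Γ a) : toAff Γ a (ofv Γ v) = shift := by
  rw [toAff_ofv, affGen, if_neg fun h : v = a => hv (Or.inr h),
    if_neg fun h : Γ.Adj a v => hv (Or.inl h)]

open scoped Classical in
noncomputable def weight (a : V) (x : Vpm V) : ℤ := if x.1 = a then sgn x else 0

lemma toAff_gen {x : Vpm V} (hx : x.1 ∈ st Γ a) : toAff Γ a (gen Γ x) = dil ^ weight a x := by
  rw [gen_eq_zpow, map_zpow, toAff_ofv, weight, affGen]
  rcases hx with hx | hx
  · replace hx : Γ.Adj a x.1 := hx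
    simp [hx, (Γ.ne_of_adj hx).symm]
  · simp [show x.1 = a from hx]

end ToAff

section Whitehead

variable {Γ : SimpleGraph V} {m : Vpm V} {P : Set (Vpm V)}

lemma GWSubset.fst_notMem_lk_s10 (hP : GWSubset Γ m P) {x : Vpm V} (hx : x ∈ P) :
    x.1 ∉ lk Γ m.1 := by
  obtain ⟨U, hU, hxU, -⟩ := hP.2.2 x hx
  rcases hU with ⟨u, hc, hU⟩ | ⟨u, -, -, rfl⟩
  · obtain ⟨hu, -, -⟩ : u ∈ comp Γ m.1 u := hc ▸ rfl
    rcases hU with rfl | rfl <;> (obtain rfl := hxU; exact hu)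
  · exact hxU.2.1

open scoped Classical in
noncomputable def leftExp (P : Set (Vpm V)) (m : Vpm V) (v : V) : ℤ :=
  if v ≠ m.1 ∧ (v, false) ∈ P then 1 else 0

open scoped Classical in
noncomputable def rightExp (P : Set (Vpm V)) (m : Vpm V) (v : V) : ℤ :=
  if v ≠ m.1 ∧ (v, true) ∈ P then -1 else 0

lemma whImage_eq (hP : GWSubset Γ m P) (v : V) :
    whImage Γ P m v = gen Γ m ^ leftExp P m v * ofv Γ v * gen Γ m ^ rightExp P m v := by
  have hm : ¬ ((m.1, true) ∈ P ∧ (m.1, false) ∈ P) := by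
    rintro ⟨ht, hf⟩
    obtain ⟨m, _ | _⟩ := m <;> exact hP.2.1 ‹_›
  have hlk (b : Bool) (h : (v, b) ∈ P) : v ∉ lk Γ m.1 := hP.fst_notMem_lk_s10 h
  unfold whImage leftExp rightExp pstar
  split_ifs <;> simp_all [pm]

lemma IsWhitehead.apply_ofv {φ : MulAut (RAAG Γ)} (hφ : IsWhitehead Γ P m φ)
    (hP : GWSubset Γ m P) (v : V) :
    φ (ofv Γ v) = gen Γ m ^ leftExp P m v * ofv Γ v * gen Γ m ^ rightExp P m v :=
  (hφ v).trans (whImage_eq hP v)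

lemma leftExp_eq_zero (hP : GWSubset Γ m P) {v : V} (hv : v ∈ st Γ m.1) :
    leftExp P m v = 0 := by
  rw [leftExp, if_neg]
  rintro ⟨hne, h⟩
  exact hv.elim (hP.fst_notMem_lk_s10 h) hne

lemma rightExp_eq_zero (hP : GWSubset Γ m P) {v : V} (hv : v ∈ st Γ m.1) :
    rightExp P m v = 0 := by
  rw [rightExp, if_neg]
  rintro ⟨hne, h⟩
  exact hv.elim (hP.fst_notMem_lk_s10 h) hne

lemma leftExp_of_ne {v : V} (h : v ≠ m.1) : leftExp P m v = P.indicator 1 (v, false) := by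
  by_cases hv : (v, false) ∈ P <;> simp [leftExp, h, hv]

lemma rightExp_of_ne {v : V} (h : v ≠ m.1) : rightExp P m v = -P.indicator 1 (v, true) := by
  by_cases hv : (v, true) ∈ P <;> simp [rightExp, h, hv]

lemma IsWhitehead.apply_gen_of_mem_st {φ : MulAut (RAAG Γ)} (hφ : IsWhitehead Γ P m φ)
    (hP : GWSubset Γ m P) {x : Vpm V} (hx : x.1 ∈ st Γ m.1) : φ (gen Γ x) = gen Γ x := by
  rw [gen_eq_zpow, map_zpow, hφ.apply_ofv hP, leftExp_eq_zero hP hx, rightExp_eq_zero hP hx]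
  simp

lemma IsWhitehead.mul_comm {Pa Qa : GWPartition Γ} {φ ψ : MulAut (RAAG Γ)}
    (hst : st Γ Pa.base.1 = st Γ Qa.base.1) (hφ : IsWhitehead Γ Pa.P Pa.base φ)
    (hψ : IsWhitehead Γ Qa.P Qa.base ψ) : φ * ψ = ψ * φ :=
  RAAG.mulAut_ext fun v =>
    MulAut.apply_apply_comm (hφ.apply_gen_of_mem_st Pa.hP (hst ▸ Or.inr rfl))
      (hψ.apply_gen_of_mem_st Qa.hP (hst.symm ▸ Or.inr rfl))
      (gen_commute (adj_or_eq_of_st_eq hst)) (hφ.apply_ofv Pa.hP v) (hψ.apply_ofv Qa.hP v)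

end Whitehead

namespace GWPartition

variable {Γ : SimpleGraph V} (Pa : GWPartition Γ)

def posSide : Set (Vpm V) := if Pa.base.2 then Pa.P else Pa.Pstar

def negSide : Set (Vpm V) := if Pa.base.2 then Pa.Pstar else Pa.P

lemma P_subset : Pa.P ⊆ (pm (lk Γ Pa.base.1))ᶜ := fun _ hx => Pa.hP.fst_notMem_lk_s10 hx

lemma Pstar_subset : Pa.Pstar ⊆ (pm (lk Γ Pa.base.1))ᶜ := Set.sdiff_subset

lemma mem_posSide : (Pa.base.1, true) ∈ Pa.posSide := by
  obtain ⟨⟨b, _ | _⟩, P, hP, hPstar, -, -⟩ := Pa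
  exacts [hPstar.1, hP.1]

lemma mem_negSide : (Pa.base.1, false) ∈ Pa.negSide := by
  obtain ⟨⟨b, _ | _⟩, P, hP, hPstar, -, -⟩ := Pa
  exacts [hP.1, hPstar.1]

lemma negSide_eq : Pa.negSide = (pm (lk Γ Pa.base.1))ᶜ \ Pa.posSide := by
  unfold negSide posSide
  split_ifs
  · rfl
  · exact (Set.sdiff_sdiff_cancel_left Pa.P_subset).symm

lemma posSide_subset : Pa.posSide ⊆ (pm (lk Γ Pa.base.1))ᶜ := by
  unfold posSide; split_ifs
  exacts [Pa.P_subset, Pa.Pstar_subset]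

lemma mem_negSide_of {x : Vpm V} (hx : x.1 ∉ lk Γ Pa.base.1) (hx' : x ∉ Pa.posSide) :
    x ∈ Pa.negSide :=
  Pa.negSide_eq ▸ ⟨hx, hx'⟩

lemma notMem_posSide : (Pa.base.1, false) ∉ Pa.posSide := by
  have := Pa.mem_negSide
  rw [negSide_eq] at this
  exact this.2

lemma fst_notMem_st_of_mem_posSide {x : Vpm V} (hx : x ∈ Pa.posSide)
    (hne : x ≠ (Pa.base.1, true)) : x.1 ∉ st Γ Pa.base.1 := by
  rintro (h | h)
  · exact Pa.posSide_subset hx h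
  · obtain ⟨v, _ | _⟩ := x
    · exact Pa.notMem_posSide (by rwa [← show v = Pa.base.1 from h])
    · exact hne (by rw [← show v = Pa.base.1 from h])

lemma fst_notMem_st_of_mem_negSide {x : Vpm V} (hx : x ∈ Pa.negSide)
    (hne : x ≠ (Pa.base.1, false)) : x.1 ∉ st Γ Pa.base.1 := by
  rw [negSide_eq] at hx
  rintro (h | h)
  · exact hx.1 h
  · obtain ⟨v, _ | _⟩ := x
    · exact hne (by rw [← show v = Pa.base.1 from h])
    · exact hx.2 (by rw [show v = Pa.base.1 from h]; exact Pa.mem_posSide)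

lemma sidesOf_eq : sidesOf Pa = {Pa.posSide, Pa.negSide} := by
  unfold sidesOf posSide negSide
  split_ifs
  exacts [rfl, Set.pair_comm _ _]

lemma two_le_ncard_posSide : 2 ≤ Pa.posSide.ncard := by
  unfold posSide; split_ifs
  exacts [Pa.thickP, Pa.thickPstar]

lemma two_le_ncard_negSide : 2 ≤ Pa.negSide.ncard := by
  unfold negSide; split_ifs
  exacts [Pa.thickPstar, Pa.thickP]

lemma sgn_mul_indicator {x : Vpm V} (hx : x.1 ∉ lk Γ Pa.base.1) :
    sgn Pa.base * Pa.P.indicator 1 x =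
      Pa.posSide.indicator 1 x - if Pa.base.2 then 0 else 1 := by
  unfold posSide GWPartition.Pstar pstar sgn
  by_cases hxP : x ∈ Pa.P <;> split_ifs <;> simp [hxP, pm, hx]

variable {Pa} {Qa : GWPartition Γ}

lemma posSide_subset_or_of_compatible (h : Compatible Pa Qa) (hb : Pa.base.1 = Qa.base.1) :
    Pa.posSide ⊆ Qa.posSide ∨ Qa.posSide ⊆ Pa.posSide := by
  have key : ∀ X ∈ sidesOf Pa, ∀ Y ∈ sidesOf Qa, X ∩ Y = ∅ →
      Pa.posSide ⊆ Qa.posSide ∨ Qa.posSide ⊆ Pa.posSide := by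
    simp only [sidesOf_eq, Set.mem_insert_iff, Set.mem_singleton_iff, forall_eq_or_imp,
      forall_eq, Set.eq_empty_iff_forall_notMem, Set.mem_inter_iff, not_and]
    refine ⟨⟨fun h => ?_, fun h => ?_⟩, fun h => ?_, fun h => ?_⟩
    · exact absurd Qa.mem_posSide (h _ (hb ▸ Pa.mem_posSide))
    · exact .inl fun x hx => by_contra fun hx' =>
        h x hx (Qa.mem_negSide_of (hb ▸ Pa.posSide_subset hx) hx')
    · exact .inr fun x hx => by_contra fun hx' =>
        h x (Pa.mem_negSide_of (hb ▸ Qa.posSide_subset hx) hx') hx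
    · exact absurd Qa.mem_negSide (h _ (hb ▸ Pa.mem_negSide))
  rcases h with (h | h | h | h) | ⟨hadj, -⟩
  exacts [key _ (.inl rfl) _ (.inl rfl) h, key _ (.inl rfl) _ (.inr rfl) h,
    key _ (.inr rfl) _ (.inl rfl) h, key _ (.inr rfl) _ (.inr rfl) h,
    absurd (hb ▸ hadj) (Γ.loopless.irrefl _)]

lemma sidesOf_eq_of_posSide_eq (hb : Pa.base.1 = Qa.base.1) (h : Pa.posSide = Qa.posSide) :
    sidesOf Pa = sidesOf Qa := by
  rw [sidesOf_eq, sidesOf_eq, negSide_eq, negSide_eq, hb, h]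

end GWPartition

section Family

variable {Γ : SimpleGraph V} {k : ℕ} {Pa : Fin k → GWPartition Γ} {φ : Fin k → MulAut (RAAG Γ)}
  {a : V}

lemma whiteheadProd_apply (hst : ∀ i, st Γ (Pa i).base.1 = st Γ a)
    (hφ : ∀ i, IsWhitehead Γ (Pa i).P (Pa i).base (φ i)) (n : Fin k → ℤ) (v : V) :
    (List.ofFn fun i => φ i ^ n i).prod (ofv Γ v) =
      (List.ofFn fun i => gen Γ (Pa i).base ^ (n i * leftExp (Pa i).P (Pa i).base v)).prod *
        ofv Γ v *
        (List.ofFn fun i => gen Γ (Pa i).base ^ (n i * rightExp (Pa i).P (Pa i).base v)).prod := by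
  simp only [List.ofFn_eq_map]
  refine MulAut.list_prod_zpow_apply (fun i j => gen_commute (adj_or_eq_of_st_eq ?_))
    (fun i j => (hφ i).apply_gen_of_mem_st (Pa i).hP ?_) (fun i => (hφ i).apply_ofv (Pa i).hP v) n _
  · rw [hst i, hst j]
  · rw [hst i, ← hst j]; exact Or.inr rfl

noncomputable def sideSum (a : V) (Pa : Fin k → GWPartition Γ) (n : Fin k → ℤ) (x : Vpm V) : ℤ :=
  ∑ i, weight a (Pa i).base * n i * (Pa i).P.indicator 1 x

lemma toAff_whiteheadProd_apply (hst : ∀ i, st Γ (Pa i).base.1 = st Γ a)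
    (hφ : ∀ i, IsWhitehead Γ (Pa i).P (Pa i).base (φ i)) (n : Fin k → ℤ) {v : V}
    (hv : v ∉ st Γ a) :
    toAff Γ a ((List.ofFn fun i => φ i ^ n i).prod (ofv Γ v)) =
      dil ^ sideSum a Pa n (v, false) * shift * dil ^ (-sideSum a Pa n (v, true)) := by
  have hmem (i : Fin k) : (Pa i).base.1 ∈ st Γ a := hst i ▸ Or.inr rfl
  have hne (i : Fin k) : v ≠ (Pa i).base.1 := fun h => hv (h ▸ hmem i)
  simp only [whiteheadProd_apply hst hφ, map_mul, map_list_prod, List.map_ofFn, Function.comp_def,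
    map_zpow, toAff_gen (hmem _), toAff_ofv_of_notMem_st hv, ← zpow_mul, List.prod_ofFn_zpow,
    sideSum, leftExp_of_ne (hne _), rightExp_of_ne (hne _), ← Finset.sum_neg_distrib, mul_neg,
    mul_assoc]

lemma sideSum_eq_of_isInner (hst : ∀ i, st Γ (Pa i).base.1 = st Γ a)
    (hφ : ∀ i, IsWhitehead Γ (Pa i).P (Pa i).base (φ i)) {n : Fin k → ℤ}
    (hΦ : IsInner (List.ofFn fun i => φ i ^ n i).prod) {x y : Vpm V} (hx : x.1 ∉ st Γ a)
    (hy : y.1 ∉ st Γ a) : sideSum a Pa n x = sideSum a Pa n y := by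
  obtain ⟨g, hg⟩ := hΦ
  have key (z : Vpm V) (hz : z.1 ∉ st Γ a) :
      (2 : ℚ) ^ sideSum a Pa n z = (toAff Γ a g).linear 1 := by
    obtain ⟨v, b⟩ := z
    have H := toAff_whiteheadProd_apply hst hφ n hz
    rw [hg, map_mul, map_mul, map_inv, toAff_ofv_of_notMem_st hz] at H
    obtain ⟨h1, h2⟩ := exponents_of_eq_conj_shift H.symm
    cases b
    · exact h1
    · rwa [show sideSum a Pa n (v, true) = sideSum a Pa n (v, false) by linarith]
  exact (zpow_right_inj₀ two_pos (by norm_num)).1 ((key x hx).trans (key y hy).symm)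

open scoped Classical in
lemma sideSum_eq_sum_posSide (n : Fin k → ℤ) {x : Vpm V} (hx : x.1 ∉ lk Γ a) :
    sideSum a Pa n x = ∑ j ∈ Finset.univ.filter (fun j => (Pa j).base.1 = a),
      n j * ((Pa j).posSide.indicator 1 x - if (Pa j).base.2 then 0 else 1) := by
  rw [sideSum, Finset.sum_filter]
  refine Finset.sum_congr rfl fun j _ => ?_
  by_cases hj : (Pa j).base.1 = a
  · rw [weight, if_pos hj, if_pos hj, mul_comm (sgn _), mul_assoc,
      (Pa j).sgn_mul_indicator (hj ▸ hx)]
  · rw [weight, if_neg hj, if_neg hj, zero_mul, zero_mul]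

open scoped Classical in
lemma eq_zero_of_isInner (hst : ∀ j, st Γ (Pa j).base.1 = st Γ a)
    (hφ : ∀ i, IsWhitehead Γ (Pa i).P (Pa i).base (φ i))
    (hne : ∀ i j, i ≠ j → sidesOf (Pa i) ≠ sidesOf (Pa j))
    (hcomp : ∀ i j, i ≠ j → Compatible (Pa i) (Pa j)) {n : Fin k → ℤ}
    (hΦ : IsInner (List.ofFn fun i => φ i ^ n i).prod) {i : Fin k} (hi : (Pa i).base.1 = a) :
    n i = 0 := by
  have hJ (j : Fin k) :
      j ∈ Finset.univ.filter (fun j => (Pa j).base.1 = a) ↔ (Pa j).base.1 = a := by simp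
  refine eq_zero_of_sum_indicator_eq (Q := fun j => (Pa j).posSide) (D := {x | x.1 ∉ st Γ a})
    ?_ ?_ ?_ ?_ ?_ ?_ i ((hJ i).2 hi)
  · intro j hj j' hj'
    rcases eq_or_ne j j' with rfl | hjj'
    · exact .inl subset_rfl
    · exact GWPartition.posSide_subset_or_of_compatible (hcomp j j' hjj')
        (((hJ j).1 hj).trans ((hJ j').1 hj').symm)
  · intro j hj j' hj' h
    by_contra hjj'
    exact hne j j' hjj'
      (GWPartition.sidesOf_eq_of_posSide_eq (((hJ j).1 hj).trans ((hJ j').1 hj').symm) h)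
  · intro j hj
    rw [hJ] at hj
    obtain ⟨x, hx, hxne⟩ := Set.exists_ne_of_one_lt_ncard (Pa j).two_le_ncard_posSide (a, true)
    exact ⟨x, hx, hj ▸ (Pa j).fst_notMem_st_of_mem_posSide hx (hj ▸ hxne)⟩
  · intro j hj j' hj' hjj'
    rw [hJ] at hj hj'
    obtain ⟨x, hxj', hxj⟩ := Set.exists_of_ssubset hjj'
    have hxne : x ≠ ((Pa j').base.1, true) := fun h => hxj (h ▸ hj' ▸ hj ▸ (Pa j).mem_posSide)
    exact ⟨x, ⟨hxj', hxj⟩, hj' ▸ (Pa j').fst_notMem_st_of_mem_posSide hxj' hxne⟩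
  · intro j hj
    rw [hJ] at hj
    obtain ⟨x, hx, hxne⟩ := Set.exists_ne_of_one_lt_ncard (Pa j).two_le_ncard_negSide (a, false)
    exact ⟨x, hj ▸ (Pa j).fst_notMem_st_of_mem_negSide hx (hj ▸ hxne), ((Pa j).negSide_eq ▸ hx).2⟩
  · intro x hx y hy
    have h := sideSum_eq_of_isInner hst hφ hΦ hx hy
    have hlk {z : Vpm V} (hz : z.1 ∉ st Γ a) : z.1 ∉ lk Γ a := fun h => hz (.inl h)
    rw [sideSum_eq_sum_posSide n (hlk hx), sideSum_eq_sum_posSide n (hlk hy)] at h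
    simpa only [mul_sub, Finset.sum_sub_distrib, sub_left_inj] using h

end Family

theorem stmt10_general {V : Type*} (Γ : SimpleGraph V) (m₀ : V)
    (habelian : ∀ u : V, Eqv Γ m₀ u → st Γ u = st Γ m₀)
    (k : ℕ) (Pa : Fin k → GWPartition Γ)
    (hbase : ∀ i, Eqv Γ m₀ ((Pa i).base.1))
    (hne : ∀ i j, i ≠ j → sidesOf (Pa i) ≠ sidesOf (Pa j))
    (hcomp : ∀ i j, i ≠ j → Compatible (Pa i) (Pa j))
    (φ : Fin k → MulAut (RAAG Γ))
    (hφ : ∀ i, IsWhitehead Γ (Pa i).P ((Pa i).base) (φ i)) :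
    (∀ i j, CommuteOuter (φ i) (φ j)) ∧
    (∀ n : Fin k → ℤ, IsInner (List.ofFn fun i => φ i ^ n i).prod → ∀ i, n i = 0) := by
  have hst (i : Fin k) : st Γ (Pa i).base.1 = st Γ m₀ := habelian _ (hbase i)
  refine ⟨fun i j => commuteOuter_of_mul_comm ((hφ i).mul_comm ?_ (hφ j)), fun n hΦ i => ?_⟩
  · rw [hst i, hst j]
  · exact eq_zero_of_isInner (fun j => (hst j).trans (hst i).symm) hφ hne hcomp hΦ rfl

/-- A pairwise compatible collection of distinct `ΓW`-partitions based at elements of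
an abelian equivalence class `[m₀]` gives Whitehead automorphisms whose images in
`Out(A_Γ)` generate a free abelian subgroup of rank `k`: they pairwise commute as
outer automorphisms and any inner product of powers has all exponents zero. -/
theorem stmt10 {V : Type*} [Fintype V] (Γ : SimpleGraph V) (m₀ : V)
    (habelian : ∀ u : V, Eqv Γ m₀ u → st Γ u = st Γ m₀)
    (k : ℕ) (Pa : Fin k → GWPartition Γ)
    (hbase : ∀ i, Eqv Γ m₀ ((Pa i).base.1))
    (hne : ∀ i j, i ≠ j → sidesOf (Pa i) ≠ sidesOf (Pa j))
    (hcomp : ∀ i j, i ≠ j → Compatible (Pa i) (Pa j))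
    (φ : Fin k → MulAut (RAAG Γ))
    (hφ : ∀ i, IsWhitehead Γ (Pa i).P ((Pa i).base) (φ i)) :
    (∀ i j, CommuteOuter (φ i) (φ j)) ∧
    (∀ n : Fin k → ℤ, IsInner (List.ofFn fun i => φ i ^ n i).prod → ∀ i, n i = 0) :=
  stmt10_general Γ m₀ habelian k Pa hbase hne hcomp φ hφ

end GW
end
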